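/- arXiv:1411.0908 — 13 statements merged into one kernel-verified Lean document; each statement's English description precedes it below -/
import Mathlib

section
/- Let X be a topological space and let 𝓗 be an ideal in X such that X is connected modulo 𝓗. Then there exists an ideal 𝓜 in X which contains 𝓗, such that X is connected modulo 𝓜, and which is maximal with respect to set-theoretic inclusion among ideals 𝓖 in X containing 𝓗 with X connected modulo 𝓖. -/
open Set Topology

/-- An ideal in a set `X`: a nonempty collection of subsets of `X`, downward closed
and closed under finite unions. -/
def IsSetIdeal {X : Type*} (H : Set (Set X)) : Prop :=
  H.Nonempty ∧ (∀ A B : Set X, A ⊆ B → B ∈ H → A ∈ H) ∧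
    (∀ A B : Set X, A ∈ H → B ∈ H → A ∪ B ∈ H)

/-- A continuous map `f : X → [0,1]` is 2-valued modulo an ideal `H` if `f⁻¹(0) ∉ H`,
`f⁻¹(1) ∉ H`, and `X \ (f⁻¹(0) ∪ f⁻¹(1)) ∈ H`. -/
def TwoValuedMod {X : Type*} [TopologicalSpace X] (H : Set (Set X)) (f : X → ℝ) : Prop :=
  Continuous f ∧ (∀ x, f x ∈ Set.Icc (0 : ℝ) 1) ∧
    f ⁻¹' {0} ∉ H ∧ f ⁻¹' {1} ∉ H ∧ (f ⁻¹' {0} ∪ f ⁻¹' {1})ᶜ ∈ H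

/-- `X` is connected modulo the ideal `H` if there is no continuous `f : X → [0,1]`
that is 2-valued modulo `H`. -/
def ConnectedMod (X : Type*) [TopologicalSpace X] (H : Set (Set X)) : Prop :=
  ¬ ∃ f : X → ℝ, TwoValuedMod H f

/-- If `X` is connected modulo an ideal `H`, then there is an ideal `M ⊇ H` modulo which
`X` is connected, maximal with respect to inclusion among such ideals. -/
theorem exists_maximal_ideal_connectedMod {X : Type*} [TopologicalSpace X]
    (H : Set (Set X)) (hH : IsSetIdeal H) (hc : ConnectedMod X H) :
    ∃ M : Set (Set X), IsSetIdeal M ∧ H ⊆ M ∧ ConnectedMod X M ∧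
      ∀ G : Set (Set X), IsSetIdeal G → H ⊆ G → ConnectedMod X G → M ⊆ G → G = M := by
  obtain ⟨M, hHM, hMmax⟩ := zorn_subset_nonempty
      {G : Set (Set X) | IsSetIdeal G ∧ H ⊆ G ∧ ConnectedMod X G}
      (fun c hc hchain ⟨G0, hG0⟩ => by
        refine ⟨⋃₀ c, ⟨⟨?_, ?_, ?_⟩, ?_, ?_⟩, fun G hG => subset_sUnion_of_mem hG⟩
        · obtain ⟨A, hA⟩ := (hc hG0).1.1
          exact ⟨A, G0, hG0, hA⟩
        · rintro A B hAB ⟨G, hGc, hBG⟩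
          exact ⟨G, hGc, (hc hGc).1.2.1 A B hAB hBG⟩
        · rintro A B ⟨G1, hG1, hA⟩ ⟨G2, hG2, hB⟩
          rcases hchain.total hG1 hG2 with h | h
          · exact ⟨G2, hG2, (hc hG2).1.2.2 A B (h hA) hB⟩
          · exact ⟨G1, hG1, (hc hG1).1.2.2 A B hA (h hB)⟩
        · exact (hc hG0).2.1.trans (subset_sUnion_of_mem hG0)
        · rintro ⟨f, hcont, hrange, h0, h1, hco⟩
          obtain ⟨G, hGc, hcoG⟩ := hco
          exact (hc hGc).2.2 ⟨f, hcont, hrange,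
            fun h => h0 ⟨G, hGc, h⟩, fun h => h1 ⟨G, hGc, h⟩, hcoG⟩)
      H ⟨hH, subset_rfl, hc⟩
  exact ⟨M, hMmax.prop.1, hMmax.prop.2.1, hMmax.prop.2.2,
    fun G hG1 hG2 hG3 hMG => subset_antisymm (hMmax.le_of_ge ⟨hG1, hG2, hG3⟩ hMG) hMG⟩
end

section
/- Let X and Y be topological spaces, let φ : X → Y be a continuous surjection, and let 𝓗 be an ideal in Y. If X is connected modulo the ideal φ⁻¹(𝓗) = {A ⊆ X : φ(A) ∈ 𝓗}, then Y is connected modulo 𝓗. -/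
open Set Topology

/-- If `φ : X → Y` is a continuous surjection, `H` is an ideal in `Y`, and `X` is connected
modulo `φ⁻¹(H) = {A ⊆ X : φ(A) ∈ H}`, then `Y` is connected modulo `H`. -/
theorem connectedMod_of_connectedMod_preimage {X Y : Type*}
    [TopologicalSpace X] [TopologicalSpace Y]
    (φ : X → Y) (hφc : Continuous φ) (hφs : Function.Surjective φ)
    (H : Set (Set Y)) (hH : IsSetIdeal H)
    (hX : ConnectedMod X {A : Set X | φ '' A ∈ H}) :
    ConnectedMod Y H := by
  rintro ⟨f, hfc, hfI, hf0, hf1, hfc2⟩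
  apply hX
  refine ⟨f ∘ φ, hfc.comp hφc, fun x => hfI (φ x), ?_, ?_, ?_⟩
  · simp only [Set.mem_setOf_eq]
    have : φ '' ((f ∘ φ) ⁻¹' {0}) = f ⁻¹' {0} := by
      rw [Set.preimage_comp, Set.image_preimage_eq _ hφs]
    rw [this]; exact hf0
  · simp only [Set.mem_setOf_eq]
    have : φ '' ((f ∘ φ) ⁻¹' {1}) = f ⁻¹' {1} := by
      rw [Set.preimage_comp, Set.image_preimage_eq _ hφs]
    rw [this]; exact hf1
  · simp only [Set.mem_setOf_eq]
    refine hH.2.1 _ _ ?_ hfc2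
    rintro y ⟨x, hx, rfl⟩
    intro h
    exact hx (by rcases h with h | h <;> [left; right] <;> exact h)
end

section
/- Let X be a topological space and let 𝓗 be an ideal in X. Suppose X = X₁ ∪ ⋯ ∪ Xₙ where, for each i = 1,…,n, the subspace Xᵢ is connected modulo 𝓗|_{Xᵢ}. Suppose further that A = X₁ ∩ ⋯ ∩ Xₙ is connected modulo 𝓗|_A and A ∉ 𝓗. Then X is connected modulo 𝓗. -/
open Set Topology

/-- The restriction `𝓗|_A = {H ∩ A : H ∈ 𝓗}` of an ideal, as an ideal in the subspace `A`. -/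
def RestrictIdeal {X : Type*} (H : Set (Set X)) (A : Set X) : Set (Set ↥A) :=
  {S | ∃ T ∈ H, S = (Subtype.val : ↥A → X) ⁻¹' T}

lemma ideal_empty {X : Type*} {H : Set (Set X)} (hH : IsSetIdeal H) : (∅ : Set X) ∈ H := by
  obtain ⟨⟨B, hB⟩, hdown, -⟩ := hH
  exact hdown ∅ B (Set.empty_subset B) hB

lemma ideal_iUnion {X : Type*} {H : Set (Set X)} (hH : IsSetIdeal H) :
    ∀ {n : ℕ} (s : Fin n → Set X), (∀ i, s i ∈ H) → (⋃ i, s i) ∈ H := by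
  intro n
  induction n with
  | zero => intro s _; simpa using ideal_empty hH
  | succ n ih =>
    intro s hs
    have heq : ⋃ i, s i = s 0 ∪ ⋃ i : Fin n, s i.succ := by
      ext x; simp [Fin.exists_fin_succ]
    rw [heq]
    exact hH.2.2 _ _ (hs 0) (ih _ fun i => hs i.succ)

lemma restrict_mem_iff {X : Type*} {H : Set (Set X)} (hH : IsSetIdeal H)
    (A B : Set X) :
    ((Subtype.val : ↥A → X) ⁻¹' B) ∈ RestrictIdeal H A ↔ B ∩ A ∈ H := by
  constructor
  · rintro ⟨T, hT, hEq⟩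
    refine hH.2.1 _ T (fun x hx => ?_) hT
    have hm : (⟨x, hx.2⟩ : ↥A) ∈ ((Subtype.val : ↥A → X) ⁻¹' B) := hx.1
    rw [hEq] at hm
    exact hm
  · intro h
    exact ⟨B ∩ A, h, by ext a; simp [Set.mem_inter_iff, a.2]⟩

lemma restrict_twoValued {X : Type*} [TopologicalSpace X] {H : Set (Set X)}
    (hH : IsSetIdeal H) {f : X → ℝ} (hc : Continuous f)
    (hmem : ∀ x, f x ∈ Set.Icc (0:ℝ) 1)
    (hmid : (f ⁻¹' {0} ∪ f ⁻¹' {1})ᶜ ∈ H) (S : Set X)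
    (h0 : f ⁻¹' {0} ∩ S ∉ H) (h1 : f ⁻¹' {1} ∩ S ∉ H) :
    TwoValuedMod (RestrictIdeal H S) (f ∘ (Subtype.val : ↥S → X)) := by
  refine ⟨hc.comp continuous_subtype_val, fun x => hmem x, ?_, ?_, ?_⟩
  · have h : (f ∘ Subtype.val) ⁻¹' {0} = (Subtype.val : ↥S → X) ⁻¹' (f ⁻¹' {0}) := rfl
    rw [h, restrict_mem_iff hH]; exact h0
  · have h : (f ∘ Subtype.val) ⁻¹' {1} = (Subtype.val : ↥S → X) ⁻¹' (f ⁻¹' {1}) := rfl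
    rw [h, restrict_mem_iff hH]; exact h1
  · have h : ((f ∘ Subtype.val) ⁻¹' {0} ∪ (f ∘ Subtype.val) ⁻¹' {1})ᶜ
        = (Subtype.val : ↥S → X) ⁻¹' ((f ⁻¹' {0} ∪ f ⁻¹' {1})ᶜ) := by
      ext a; simp
    rw [h, restrict_mem_iff hH]
    exact hH.2.1 _ _ Set.inter_subset_left hmid

/-- If `X = X₁ ∪ ⋯ ∪ Xₙ` with each `Xᵢ` connected modulo `𝓗|_{Xᵢ}`, and the intersection
`A = X₁ ∩ ⋯ ∩ Xₙ` is connected modulo `𝓗|_A` and is not in `𝓗`, then `X` is connected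
modulo `𝓗`. -/
theorem connectedMod_of_finite_union {X : Type*} [TopologicalSpace X]
    (H : Set (Set X)) (hH : IsSetIdeal H)
    (n : ℕ) (hn : 0 < n) (Xs : Fin n → Set X)
    (hcover : ⋃ i, Xs i = Set.univ)
    (hconn : ∀ i, ConnectedMod ↥(Xs i) (RestrictIdeal H (Xs i)))
    (hA : ConnectedMod ↥(⋂ i, Xs i) (RestrictIdeal H (⋂ i, Xs i)))
    (hAnH : (⋂ i, Xs i) ∉ H) :
    ConnectedMod X H := by
  rintro ⟨f, hc, hmem, h0, h1, hmid⟩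
  set A := ⋂ i, Xs i with hAdef
  have hAsub : ∀ i, A ⊆ Xs i := fun i => Set.iInter_subset Xs i
  have hnotboth : f ⁻¹' {0} ∩ A ∈ H ∨ f ⁻¹' {1} ∩ A ∈ H := by
    by_contra hcon
    push_neg at hcon
    exact hA ⟨_, restrict_twoValued hH hc hmem hmid A hcon.1 hcon.2⟩
  have hone : ¬ (f ⁻¹' {0} ∩ A ∈ H ∧ f ⁻¹' {1} ∩ A ∈ H) := by
    rintro ⟨ha, hb⟩
    apply hAnH
    refine hH.2.1 A ((f ⁻¹' {0} ∩ A) ∪ ((f ⁻¹' {1} ∩ A) ∪ (f ⁻¹' {0} ∪ f ⁻¹' {1})ᶜ))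
      (fun x hx => ?_) (hH.2.2 _ _ ha (hH.2.2 _ _ hb hmid))
    by_cases hx0 : f x = 0
    · exact Or.inl ⟨hx0, hx⟩
    · by_cases hx1 : f x = 1
      · exact Or.inr (Or.inl ⟨hx1, hx⟩)
      · exact Or.inr (Or.inr (by simp [hx0, hx1]))
  have hper : ∀ (i : Fin n), f ⁻¹' {0} ∩ Xs i ∈ H ∨ f ⁻¹' {1} ∩ Xs i ∈ H := by
    intro i
    by_contra hcon
    push_neg at hcon
    exact hconn i ⟨_, restrict_twoValued hH hc hmem hmid (Xs i) hcon.1 hcon.2⟩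
  have hbig : ∀ (c : Set X), (∀ i, c ∩ Xs i ∈ H) → c ∈ H := by
    intro c hcs
    have : c = ⋃ i, c ∩ Xs i := by
      rw [← Set.inter_iUnion, hcover, Set.inter_univ]
    rw [this]
    exact ideal_iUnion hH _ hcs
  rcases hnotboth with h0A | h1A
  · have h1A : f ⁻¹' {1} ∩ A ∉ H := fun h => hone ⟨h0A, h⟩
    apply h0
    apply hbig
    intro i
    refine (hper i).resolve_right (fun h => h1A ?_)
    exact hH.2.1 _ _ (Set.inter_subset_inter_right _ (hAsub i)) h
  · have h0A : f ⁻¹' {0} ∩ A ∉ H := fun h => hone ⟨h, h1A⟩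
    apply h1
    apply hbig
    intro i
    refine ((hper i).resolve_left (fun h => h0A ?_))
    exact hH.2.1 _ _ (Set.inter_subset_inter_right _ (hAsub i)) h
end

section
/- Let X be a topological space, let 𝓗 be an ideal in X, and let A be a subset of X such that cl_X A = X and such that the ideal generated by {cl_X(H ∩ A) : H ∈ 𝓗} equals 𝓗. If A (with the subspace topology) is connected modulo 𝓗|_A, then X is connected modulo 𝓗. -/
open Set Topology

/-- The ideal generated by a collection `𝓐` of subsets of `X`: all subsets of finite
unions of members of `𝓐`. -/
def GenIdeal {X : Type*} (𝓐 : Set (Set X)) : Set (Set X) :=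
  {S | ∃ 𝓑 : Set (Set X), 𝓑 ⊆ 𝓐 ∧ 𝓑.Finite ∧ S ⊆ ⋃₀ 𝓑}

/-- If `A` is dense in `X`, the ideal generated by `{cl_X (H ∩ A) : H ∈ 𝓗}` equals `𝓗`,
and `A` is connected modulo `𝓗|_A`, then `X` is connected modulo `𝓗`. -/
theorem connectedMod_of_dense {X : Type*} [TopologicalSpace X]
    (H : Set (Set X)) (hH : IsSetIdeal H) (A : Set X)
    (hdense : closure A = Set.univ)
    (hclH : GenIdeal {S : Set X | ∃ T ∈ H, S = closure (T ∩ A)} = H)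
    (hA : ConnectedMod ↥A (RestrictIdeal H A)) :
    ConnectedMod X H := by
  rintro ⟨f, hfc, hfr, hf0, hf1, hfM⟩
  have hDense : Dense A := by rw [dense_iff_closure_eq]; exact hdense
  have hgen : ∀ T ∈ H, closure (T ∩ A) ∈ H := by
    intro T hT
    rw [← hclH]
    exact ⟨{closure (T ∩ A)}, by simpa using ⟨T, hT, rfl⟩, Set.finite_singleton _, by simp⟩
  have key : ∀ (c : ℝ) (U : Set X), IsOpen U → f ⁻¹' {c} ⊆ U →
      U ⊆ f ⁻¹' {c} ∪ (f ⁻¹' {0} ∪ f ⁻¹' {1})ᶜ →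
      closure (f ⁻¹' {c} ∩ A) ∈ H → f ⁻¹' {c} ∈ H := by
    intro c U hU hsub hsub2 hcl
    have h1 : closure ((f ⁻¹' {0} ∪ f ⁻¹' {1})ᶜ ∩ A) ∈ H := hgen _ hfM
    have h2 : f ⁻¹' {c} ⊆ closure (f ⁻¹' {c} ∩ A) ∪
        closure ((f ⁻¹' {0} ∪ f ⁻¹' {1})ᶜ ∩ A) := by
      intro x hx
      have hx1 : x ∈ closure (U ∩ A) :=
        hDense.open_subset_closure_inter hU (hsub hx)
      have hx2 : x ∈ closure ((f ⁻¹' {c} ∪ (f ⁻¹' {0} ∪ f ⁻¹' {1})ᶜ) ∩ A) :=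
        closure_mono (Set.inter_subset_inter_left _ hsub2) hx1
      rwa [Set.union_inter_distrib_right, closure_union] at hx2
    exact hH.2.1 _ _ h2 (hH.2.2 _ _ hcl h1)
  have hinter : ∀ (c : ℝ), (Subtype.val : ↥A → X) ⁻¹' (f ⁻¹' {c}) ∈
      RestrictIdeal H A → closure (f ⁻¹' {c} ∩ A) ∈ H := by
    intro c ⟨T, hT, hTeq⟩
    have him := congrArg (Set.image (Subtype.val : ↥A → X)) hTeq
    rw [Subtype.image_preimage_coe, Subtype.image_preimage_coe] at him
    rw [Set.inter_comm, him, Set.inter_comm]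
    exact hgen T hT
  refine hA ⟨f ∘ Subtype.val, hfc.comp continuous_subtype_val, fun x => hfr x, ?_, ?_, ?_⟩
  · intro hmem
    refine hf0 (key 0 (f ⁻¹' Set.Iio (1/2)) (isOpen_Iio.preimage hfc) ?_ ?_ (hinter 0 hmem))
    · intro x hx; simp only [Set.mem_preimage, Set.mem_singleton_iff] at hx
      simp only [Set.mem_preimage, hx, Set.mem_Iio]; norm_num
    · intro x hx; simp only [Set.mem_preimage, Set.mem_Iio] at hx
      by_cases h0 : f x = 0
      · exact Or.inl h0
      · refine Or.inr ?_
        simp only [Set.mem_compl_iff, Set.mem_union, Set.mem_preimage,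
          Set.mem_singleton_iff]
        push_neg
        exact ⟨h0, by linarith⟩
  · intro hmem
    refine hf1 (key 1 (f ⁻¹' Set.Ioi (1/2)) (isOpen_Ioi.preimage hfc) ?_ ?_ (hinter 1 hmem))
    · intro x hx; simp only [Set.mem_preimage, Set.mem_singleton_iff] at hx
      simp only [Set.mem_preimage, hx, Set.mem_Ioi]; norm_num
    · intro x hx; simp only [Set.mem_preimage, Set.mem_Ioi] at hx
      by_cases h1 : f x = 1
      · exact Or.inl h1
      · refine Or.inr ?_
        simp only [Set.mem_compl_iff, Set.mem_union, Set.mem_preimage,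
          Set.mem_singleton_iff]
        push_neg
        exact ⟨by linarith, h1⟩
  · refine ⟨(f ⁻¹' {0} ∪ f ⁻¹' {1})ᶜ, hfM, ?_⟩
    ext x
    simp [Set.mem_preimage]
end

section
/- Let X be a Tychonoff (completely regular Hausdorff) space and let 𝓗 be an ideal in X. Let βX denote the Stone–Čech compactification of X, with X identified with its image in βX, and let λ_𝓗X = ⋃{int_{βX} cl_{βX} A : A ⊆ X and cl_X A ∈ 𝓗}. Then X is connected modulo 𝓗 if and only if the subspace βX \ λ_𝓗X is preconnected (i.e., it cannot be written as the union of two nonempty separated subsets). -/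
open Set Topology

/-- The open subspace `λ_𝓗X = ⋃ {int_{βX} cl_{βX} A : A ⊆ X, cl_X A ∈ 𝓗}` of `βX`. -/
def lambdaSet {X : Type*} [TopologicalSpace X] (H : Set (Set X)) : Set (StoneCech X) :=
  ⋃₀ {S | ∃ A : Set X, closure A ∈ H ∧ S = interior (closure (stoneCechUnit '' A))}

section Clamp

/-- An auxiliary "clamp" function: `0` for `a ≤ 1/4`, `1` for `a ≥ 3/4`. -/
noncomputable def clampFn (a : ℝ) : ℝ := max 0 (min 1 (2 * a - 1/2))

lemma clampFn_continuous : Continuous clampFn := by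
  unfold clampFn; fun_prop

lemma clampFn_eq_zero {a : ℝ} : clampFn a = 0 ↔ a ≤ 1/4 := by
  unfold clampFn
  rw [max_eq_left_iff]
  constructor
  · intro h
    rcases min_le_iff.mp h with h' | h' <;> linarith
  · intro h
    exact min_le_iff.mpr (Or.inr (by linarith))

lemma clampFn_eq_one {a : ℝ} : clampFn a = 1 ↔ 3/4 ≤ a := by
  unfold clampFn
  constructor
  · intro h
    rcases max_choice 0 (min 1 (2 * a - 1/2)) with hm | hm
    · have h01 : (0 : ℝ) = 1 := hm.symm.trans h
      norm_num at h01
    · have h2 : min 1 (2 * a - 1/2) = 1 := hm.symm.trans h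
      have := min_eq_left_iff.mp h2
      linarith
  · intro h
    rw [min_eq_left (by linarith : (1:ℝ) ≤ 2 * a - 1/2)]
    exact max_eq_right zero_le_one

lemma clampFn_mem (a : ℝ) : clampFn a ∈ Set.Icc (0:ℝ) 1 :=
  ⟨le_max_left _ _, max_le (by norm_num) (min_le_left _ _)⟩

end Clamp

section Aux

lemma IsSetIdeal.empty_mem {Y : Type*} {H : Set (Set Y)} (hH : IsSetIdeal H) : ∅ ∈ H := by
  obtain ⟨B, hB⟩ := hH.1
  exact hH.2.1 ∅ B (Set.empty_subset B) hB

lemma IsSetIdeal.biUnion_mem {Y ι : Type*} {H : Set (Set Y)} (hH : IsSetIdeal H)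
    (t : Finset ι) {s : ι → Set Y} :
    (∀ i ∈ t, s i ∈ H) → (⋃ i ∈ t, s i) ∈ H := by
  classical
  induction t using Finset.induction_on with
  | empty => intro _; simpa using hH.empty_mem
  | @insert a t ha ih =>
    intro hs
    rw [Finset.set_biUnion_insert]
    exact hH.2.2 _ _ (hs a (Finset.mem_insert_self _ _))
      (ih fun i hi => hs i (Finset.mem_insert_of_mem hi))

variable {X : Type*} [TopologicalSpace X] [T35Space X]

omit [T35Space X] in
lemma isOpen_lambdaSet (H : Set (Set X)) : IsOpen (lambdaSet H) := by
  apply isOpen_sUnion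
  rintro S ⟨A, -, rfl⟩
  exact isOpen_interior

omit [T35Space X] in
lemma interior_subset_lambdaSet {H : Set (Set X)} {A : Set X} (hA : closure A ∈ H) :
    interior (closure (stoneCechUnit '' A)) ⊆ lambdaSet H :=
  Set.subset_sUnion_of_mem ⟨A, hA, rfl⟩

lemma mem_closure_of_unit_mem_closure_image {A : Set X} {x : X}
    (hx : stoneCechUnit x ∈ closure (stoneCechUnit '' A)) : x ∈ closure A := by
  by_contra hxA
  obtain ⟨f, hf, hfx, hf1⟩ :=
    CompletelyRegularSpace.completely_regular x (closure A) isClosed_closure hxA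
  have hg : Continuous (stoneCechExtend hf) := continuous_stoneCechExtend hf
  have hcl : closure (stoneCechUnit '' A) ⊆ stoneCechExtend hf ⁻¹' {1} := by
    apply closure_minimal _ (isClosed_singleton.preimage hg)
    rintro _ ⟨a, ha, rfl⟩
    have h1 : stoneCechExtend hf (stoneCechUnit a) = f a :=
      congrFun (stoneCechExtend_extends hf) a
    have h2 : f a = 1 := hf1 (subset_closure ha)
    simp [h1, h2]
  have h3 := hcl hx
  have h4 : stoneCechExtend hf (stoneCechUnit x) = f x :=
    congrFun (stoneCechExtend_extends hf) x
  rw [Set.mem_preimage, Set.mem_singleton_iff, h4, hfx] at h3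
  exact zero_ne_one h3

/-- If the closure in `βX` of (the image of) `S` is contained in `λ_𝓗X`, then `S ∈ 𝓗`. -/
lemma mem_of_closure_image_subset_lambdaSet {H : Set (Set X)} (hH : IsSetIdeal H)
    {S : Set X} (h : closure (stoneCechUnit '' S) ⊆ lambdaSet H) : S ∈ H := by
  set ι := {A : Set X // closure A ∈ H}
  have hcpt : IsCompact (closure (stoneCechUnit '' S)) := isClosed_closure.isCompact
  have hcov : closure (stoneCechUnit '' S) ⊆
      ⋃ i : ι, interior (closure (stoneCechUnit '' i.1)) := by
    refine h.trans (Set.sUnion_subset ?_)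
    rintro T ⟨A, hA, rfl⟩
    exact Set.subset_iUnion (fun i : ι => interior (closure (stoneCechUnit '' i.1))) ⟨A, hA⟩
  obtain ⟨t, ht⟩ := hcpt.elim_finite_subcover _ (fun i : ι => isOpen_interior) hcov
  have hsub : S ⊆ ⋃ i ∈ t, closure (i : ι).1 := by
    intro x hx
    have hx1 : stoneCechUnit x ∈ closure (stoneCechUnit '' S) :=
      subset_closure (Set.mem_image_of_mem _ hx)
    obtain ⟨i, hit, hxi⟩ := Set.mem_iUnion₂.mp (ht hx1)
    exact Set.mem_iUnion₂.mpr ⟨i, hit,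
      mem_closure_of_unit_mem_closure_image (interior_subset hxi)⟩
  exact hH.2.1 _ _ hsub (hH.biUnion_mem t fun i _ => i.2)

end Aux

/-- A Tychonoff space `X` is connected modulo an ideal `𝓗` iff `βX \ λ_𝓗X` is
preconnected. -/
theorem connectedMod_iff_isPreconnected_compl_lambda {X : Type*} [TopologicalSpace X]
    [T35Space X] (H : Set (Set X)) (hH : IsSetIdeal H) :
    ConnectedMod X H ↔ IsPreconnected ((lambdaSet H)ᶜ) := by
  constructor
  · -- ConnectedMod → preconnected; by contradiction
    intro hcm
    by_contra hnpre
    rw [IsPreconnected] at hnpre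
    push_neg at hnpre
    obtain ⟨u, v, hu, hv, hcov, hne1, hne2, hem⟩ := hnpre
    set K : Set (StoneCech X) := (lambdaSet H)ᶜ with hKdef
    have hKc : IsClosed K := (isOpen_lambdaSet H).isClosed_compl
    set K0 : Set (StoneCech X) := K \ v with hK0def
    set K1 : Set (StoneCech X) := K \ u with hK1def
    have hK0c : IsClosed K0 := hKc.sdiff hv
    have hK1c : IsClosed K1 := hKc.sdiff hu
    have hd : Disjoint K0 K1 := by
      rw [Set.disjoint_left]
      rintro p ⟨hpK, hpv⟩ ⟨-, hpu⟩
      rcases hcov hpK with h | h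
      · exact hpu h
      · exact hpv h
    obtain ⟨g, hg0, hg1, hg01⟩ := exists_continuous_zero_one_of_isClosed hK0c hK1c hd
    have hgu : Continuous fun x : X => g (stoneCechUnit x) :=
      g.continuous.comp continuous_stoneCechUnit
    set f : X → ℝ := fun x => clampFn (g (stoneCechUnit x)) with hfdef
    have hfc : Continuous f := clampFn_continuous.comp hgu
    have h0 : ∀ x, f x = 0 ↔ g (stoneCechUnit x) ≤ 1/4 := fun x => clampFn_eq_zero
    have h1 : ∀ x, f x = 1 ↔ 3/4 ≤ g (stoneCechUnit x) := fun x => clampFn_eq_one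
    have hK0mem : ∀ p, p ∈ K → p ∈ u → p ∈ K0 := by
      intro p hpK hpu
      refine ⟨hpK, fun hpv => ?_⟩
      have h' : p ∈ K ∩ (u ∩ v) := ⟨hpK, hpu, hpv⟩
      rw [hem] at h'
      exact h'
    have hK1mem : ∀ p, p ∈ K → p ∈ v → p ∈ K1 := by
      intro p hpK hpv
      refine ⟨hpK, fun hpu => ?_⟩
      have h' : p ∈ K ∩ (u ∩ v) := ⟨hpK, hpu, hpv⟩
      rw [hem] at h'
      exact h'
    apply hcm
    refine ⟨f, hfc, fun x => clampFn_mem _, ?_, ?_, ?_⟩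
    · -- f ⁻¹' {0} ∉ H
      intro hZ
      have hZclosed : IsClosed (f ⁻¹' {0}) := isClosed_singleton.preimage hfc
      have hZH : closure (f ⁻¹' {0}) ∈ H := by rwa [hZclosed.closure_eq]
      set U0 : Set (StoneCech X) := {p | g p < 1/4} with hU0def
      have hU0open : IsOpen U0 := isOpen_lt g.continuous continuous_const
      have himg : U0 ∩ Set.range stoneCechUnit ⊆ stoneCechUnit '' (f ⁻¹' {0}) := by
        rintro p ⟨hp, x, rfl⟩
        refine ⟨x, ?_, rfl⟩
        simp only [Set.mem_preimage, Set.mem_singleton_iff]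
        exact (h0 x).mpr (le_of_lt hp)
      have hsub : U0 ⊆ closure (stoneCechUnit '' (f ⁻¹' {0})) :=
        (denseRange_stoneCechUnit.open_subset_closure_inter hU0open).trans (closure_mono himg)
      have hU0lam : U0 ⊆ lambdaSet H :=
        (interior_maximal hsub hU0open).trans (interior_subset_lambdaSet hZH)
      obtain ⟨p, hpK, hpu⟩ := hne1
      have hp0 : p ∈ K0 := hK0mem p hpK hpu
      have hgp : g p = 0 := hg0 hp0
      have hpU0 : p ∈ U0 := by
        show g p < 1/4
        rw [hgp]; norm_num
      exact hpK (hU0lam hpU0)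
    · -- f ⁻¹' {1} ∉ H
      intro hZ
      have hZclosed : IsClosed (f ⁻¹' {1}) := isClosed_singleton.preimage hfc
      have hZH : closure (f ⁻¹' {1}) ∈ H := by rwa [hZclosed.closure_eq]
      set U1 : Set (StoneCech X) := {p | 3/4 < g p} with hU1def
      have hU1open : IsOpen U1 := isOpen_lt continuous_const g.continuous
      have himg : U1 ∩ Set.range stoneCechUnit ⊆ stoneCechUnit '' (f ⁻¹' {1}) := by
        rintro p ⟨hp, x, rfl⟩
        refine ⟨x, ?_, rfl⟩
        simp only [Set.mem_preimage, Set.mem_singleton_iff]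
        exact (h1 x).mpr (le_of_lt hp)
      have hsub : U1 ⊆ closure (stoneCechUnit '' (f ⁻¹' {1})) :=
        (denseRange_stoneCechUnit.open_subset_closure_inter hU1open).trans (closure_mono himg)
      have hU1lam : U1 ⊆ lambdaSet H :=
        (interior_maximal hsub hU1open).trans (interior_subset_lambdaSet hZH)
      obtain ⟨p, hpK, hpv⟩ := hne2
      have hp1 : p ∈ K1 := hK1mem p hpK hpv
      have hgp : g p = 1 := hg1 hp1
      have hpU1 : p ∈ U1 := by
        show 3/4 < g p
        rw [hgp]; norm_num
      exact hpK (hU1lam hpU1)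
    · -- complement in H
      set C : Set (StoneCech X) := ⇑g ⁻¹' Set.Icc (1/4) (3/4) with hCdef
      have hCclosed : IsClosed C := isClosed_Icc.preimage g.continuous
      have himg : stoneCechUnit '' ((f ⁻¹' {0} ∪ f ⁻¹' {1})ᶜ) ⊆ C := by
        rintro _ ⟨x, hx, rfl⟩
        simp only [Set.mem_compl_iff, Set.mem_union, Set.mem_preimage,
          Set.mem_singleton_iff] at hx
        push_neg at hx
        have hx0 : ¬ g (stoneCechUnit x) ≤ 1/4 := fun h => hx.1 ((h0 x).mpr h)
        have hx1 : ¬ 3/4 ≤ g (stoneCechUnit x) := fun h => hx.2 ((h1 x).mpr h)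
        exact ⟨le_of_lt (lt_of_not_ge hx0), le_of_lt (lt_of_not_ge hx1)⟩
      have hClam : C ⊆ lambdaSet H := by
        intro p hp
        by_contra hplam
        have hpK : p ∈ K := hplam
        rcases hcov hpK with hpu | hpv
        · have hgp : g p = 0 := hg0 (hK0mem p hpK hpu)
          have h14 := hp.1
          rw [hgp] at h14
          norm_num at h14
        · have hgp : g p = 1 := hg1 (hK1mem p hpK hpv)
          have h34 := hp.2
          rw [hgp] at h34
          norm_num at h34
      exact mem_of_closure_image_subset_lambdaSet hH
        ((closure_minimal himg hCclosed).trans hClam)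
  · -- preconnected → ConnectedMod
    intro hpre hex
    obtain ⟨f, hfc, hf01, hf0, hf1, hfcH⟩ := hex
    set f' : X → unitInterval := fun x => ⟨f x, hf01 x⟩ with hf'def
    have hf'c : Continuous f' := hfc.subtype_mk _
    set g : StoneCech X → unitInterval := stoneCechExtend hf'c with hgdef
    have hgc : Continuous g := continuous_stoneCechExtend hf'c
    set G : StoneCech X → ℝ := fun p => (g p : ℝ) with hGdef
    have hGc : Continuous G := continuous_subtype_val.comp hgc
    have hGu : ∀ x, G (stoneCechUnit x) = f x := by
      intro x
      have h' : g (stoneCechUnit x) = f' x := congrFun (stoneCechExtend_extends hf'c) x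
      show ((g (stoneCechUnit x) : unitInterval) : ℝ) = f x
      rw [h']
    -- the middle strip lies in lambda
    set A : Set X := f ⁻¹' Set.Icc (1/4) (3/4) with hAdef
    have hAclosed : IsClosed A := isClosed_Icc.preimage hfc
    have hAH : closure A ∈ H := by
      rw [hAclosed.closure_eq]
      refine hH.2.1 A _ ?_ hfcH
      intro x hx
      simp only [Set.mem_compl_iff, Set.mem_union, Set.mem_preimage, Set.mem_singleton_iff]
      push_neg
      constructor
      · have h14 := hx.1
        intro h
        rw [h] at h14
        norm_num at h14
      · have h34 := hx.2
        intro h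
        rw [h] at h34
        norm_num at h34
    set W : Set (StoneCech X) := {p | 1/4 < G p} ∩ {p | G p < 3/4} with hWdef
    have hWopen : IsOpen W :=
      (isOpen_lt continuous_const hGc).inter (isOpen_lt hGc continuous_const)
    have hWlam : W ⊆ lambdaSet H := by
      have himg : W ∩ Set.range stoneCechUnit ⊆ stoneCechUnit '' A := by
        rintro p ⟨⟨hp1, hp2⟩, x, rfl⟩
        rw [Set.mem_setOf_eq, hGu x] at hp1
        rw [Set.mem_setOf_eq, hGu x] at hp2
        exact ⟨x, ⟨hp1.le, hp2.le⟩, rfl⟩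
      have hsub : W ⊆ closure (stoneCechUnit '' A) :=
        (denseRange_stoneCechUnit.open_subset_closure_inter hWopen).trans (closure_mono himg)
      exact (interior_maximal hsub hWopen).trans (interior_subset_lambdaSet hAH)
    set u : Set (StoneCech X) := {p | G p < 1/2} with hudef
    set v : Set (StoneCech X) := {p | 1/2 < G p} with hvdef
    have hu : IsOpen u := isOpen_lt hGc continuous_const
    have hv : IsOpen v := isOpen_lt continuous_const hGc
    have hcov : (lambdaSet H)ᶜ ⊆ u ∪ v := by
      intro p hp
      rcases lt_trichotomy (G p) (1/2) with h | h | h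
      · exact Or.inl h
      · exfalso
        refine hp (hWlam ⟨?_, ?_⟩)
        · show 1/4 < G p
          rw [h]; norm_num
        · show G p < 3/4
          rw [h]; norm_num
      · exact Or.inr h
    have hGconst : ∀ c : ℝ, ∀ hc : c ∈ Set.Icc (0:ℝ) 1,
        ∀ p ∈ closure (stoneCechUnit '' (f ⁻¹' {c})), G p = c := by
      intro c hc p hp
      have hsub : stoneCechUnit '' (f ⁻¹' {c}) ⊆ g ⁻¹' {(⟨c, hc⟩ : unitInterval)} := by
        rintro _ ⟨x, hx, rfl⟩
        simp only [Set.mem_preimage, Set.mem_singleton_iff]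
        have h' : g (stoneCechUnit x) = f' x := congrFun (stoneCechExtend_extends hf'c) x
        rw [h']
        exact Subtype.ext hx
      have h'' := closure_minimal hsub (isClosed_singleton.preimage hgc) hp
      rw [Set.mem_preimage, Set.mem_singleton_iff] at h''
      show ((g p : unitInterval) : ℝ) = c
      rw [h'']
    have hne1 : ((lambdaSet H)ᶜ ∩ u).Nonempty := by
      have hns : ¬ closure (stoneCechUnit '' (f ⁻¹' {0})) ⊆ lambdaSet H :=
        fun h => hf0 (mem_of_closure_image_subset_lambdaSet hH h)
      obtain ⟨p, hpc, hplam⟩ := Set.not_subset.mp hns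
      refine ⟨p, hplam, ?_⟩
      show G p < 1/2
      rw [hGconst 0 (by norm_num) p hpc]
      norm_num
    have hne2 : ((lambdaSet H)ᶜ ∩ v).Nonempty := by
      have hns : ¬ closure (stoneCechUnit '' (f ⁻¹' {1})) ⊆ lambdaSet H :=
        fun h => hf1 (mem_of_closure_image_subset_lambdaSet hH h)
      obtain ⟨p, hpc, hplam⟩ := Set.not_subset.mp hns
      refine ⟨p, hplam, ?_⟩
      show 1/2 < G p
      rw [hGconst 1 (by norm_num) p hpc]
      norm_num
    obtain ⟨p, -, hpu, hpv⟩ := hpre u v hu hv hcov hne1 hne2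
    have hpu' : G p < 1/2 := hpu
    have hpv' : 1/2 < G p := hpv
    linarith
end

section
/- Let X be a Tychonoff (completely regular Hausdorff) space and let 𝓗 be an ideal in X. Then X is local modulo 𝓗 (every point of X has an open neighborhood U in X with cl_X U ∈ 𝓗) if and only if βX \ λ_𝓗X ⊆ βX \ X, i.e., the image of X in βX is contained in λ_𝓗X. -/
open Set Topology

open unitInterval in
lemma isInducing_stoneCechUnit' {X : Type*} [TopologicalSpace X] [T35Space X] :
    IsInducing (stoneCechUnit : X → StoneCech X) := by
  rw [isInducing_iff_nhds]
  intro x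
  refine le_antisymm (continuous_stoneCechUnit.tendsto x).le_comap ?_
  intro U hU
  obtain ⟨W, hWU, hWo, hxW⟩ := mem_nhds_iff.mp hU
  obtain ⟨f, hfc, hfx, hfK⟩ :=
    CompletelyRegularSpace.completely_regular x Wᶜ hWo.isClosed_compl (by simpa using hxW)
  refine Filter.mem_comap.mpr ⟨stoneCechExtend hfc ⁻¹' ({1}ᶜ), ?_, ?_⟩
  · refine IsOpen.mem_nhds (isClosed_singleton.isOpen_compl.preimage
      (continuous_stoneCechExtend hfc)) ?_
    have he := congrFun (stoneCechExtend_extends hfc) x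
    simp only [Function.comp_apply] at he
    simp only [mem_preimage, mem_compl_iff, mem_singleton_iff, he, hfx]
    exact zero_ne_one
  · intro y hy
    have he := congrFun (stoneCechExtend_extends hfc) y
    simp only [Function.comp_apply] at he
    simp only [mem_preimage, mem_compl_iff, mem_singleton_iff, he] at hy
    by_contra hyU
    have : f y = 1 := hfK (fun h => hyU (hWU h))
    exact hy this

/-- A Tychonoff space `X` is local modulo an ideal `𝓗` iff `βX \ λ_𝓗X ⊆ βX \ X`, i.e.,
the image of `X` in `βX` is contained in `λ_𝓗X`. -/
theorem localMod_iff_range_subset_lambda {X : Type*} [TopologicalSpace X]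
    [T35Space X] (H : Set (Set X)) (hH : IsSetIdeal H) :
    (∀ x : X, ∃ U : Set X, IsOpen U ∧ x ∈ U ∧ closure U ∈ H) ↔
      Set.range (stoneCechUnit : X → StoneCech X) ⊆ lambdaSet H := by
  rw [lambdaSet]
  have hInd : IsInducing (stoneCechUnit : X → StoneCech X) := isInducing_stoneCechUnit'
  constructor
  · rintro h _ ⟨x, rfl⟩
    obtain ⟨U, hUo, hxU, hUcl⟩ := h x
    obtain ⟨V, hVo, hVU⟩ := hInd.isOpen_iff.mp hUo
    have hxV : stoneCechUnit x ∈ V := by rw [← hVU] at hxU; exact hxU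
    have hsub : V ⊆ closure (stoneCechUnit '' U) := by
      refine (denseRange_stoneCechUnit.open_subset_closure_inter hVo).trans
        (closure_mono ?_)
      rintro z ⟨hzV, y, rfl⟩
      exact ⟨y, by rw [← hVU]; exact hzV, rfl⟩
    exact ⟨_, ⟨U, hUcl, rfl⟩, interior_maximal hsub hVo hxV⟩
  · intro h x
    obtain ⟨S, ⟨A, hA, rfl⟩, hxS⟩ := h ⟨x, rfl⟩
    refine ⟨stoneCechUnit ⁻¹' interior (closure (stoneCechUnit '' A)),
      isOpen_interior.preimage continuous_stoneCechUnit, hxS, ?_⟩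
    refine hH.2.1 _ _ ?_ hA
    have hsub : stoneCechUnit ⁻¹' interior (closure (stoneCechUnit '' A)) ⊆ closure A := by
      rw [hInd.closure_eq_preimage_closure_image A]
      exact preimage_mono interior_subset
    calc closure (stoneCechUnit ⁻¹' interior (closure (stoneCechUnit '' A)))
        ⊆ closure (closure A) := closure_mono hsub
      _ = closure A := closure_closure
end

section
/- Let X be a topological space and let P be a property of subsets of X such that: the empty set has P; whenever B ⊆ X has P, A ⊆ B, and A is closed in X, then A has P; and whenever A and B are closed subsets of X both having P, then A ∪ B has P, so that 𝓗_P(X) = {H ⊆ X : cl_X H has P} is an ideal in X. Suppose X = X₁ ∪ ⋯ ∪ Xₙ where each Xᵢ is a closed subspace of X which is connected modulo the ideal 𝓗_P(Xᵢ) = {H ⊆ Xᵢ : cl_{Xᵢ} H has P} in Xᵢ, and suppose A = X₁ ∩ ⋯ ∩ Xₙ is connected modulo the ideal 𝓗_P(A) = {H ⊆ A : cl_A H has P} in A and A does not have P. Then X is connected modulo 𝓗_P(X). -/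
open Set Topology

/-!
Let `f` be 2-valued modulo `𝓗_P(X)` and write `Z₀ = f⁻¹(0)`, `Z₁ = f⁻¹(1)`. On each closed piece `Xᵢ`
the restriction of `f` cannot be 2-valued, so `cl (Xᵢ ∩ Z₀)` or `cl (Xᵢ ∩ Z₁)` has `P`. Since the
cover is finite and closures commute with finite unions, `cl Z₀` would have `P` if every
`cl (Xᵢ ∩ Z₀)` did; hence some `cl (Xᵢ ∩ Z₁)` and likewise some `cl (Xⱼ ∩ Z₀)` has `P`. Then the
intersection `A ⊆ Xᵢ ∩ Xⱼ` lies in `cl (Xⱼ ∩ Z₀) ∪ cl (Xᵢ ∩ Z₁) ∪ cl (X \ (Z₀ ∪ Z₁))`, a closed set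
with `P`, so `A` has `P`.
-/

theorem IsClosed.image_val_closure_preimage {X : Type*} [TopologicalSpace X] {T : Set X}
    (hT : IsClosed T) (s : Set X) :
    (Subtype.val : T → X) '' closure (Subtype.val ⁻¹' s) = closure (T ∩ s) := by
  rw [← hT.isClosedEmbedding_subtypeVal.closure_image_eq, Subtype.image_preimage_coe]

section Property

variable {X : Type*} [TopologicalSpace X] {P : Set X → Prop}

theorem property_iUnion_of_finite {ι : Type*} [Finite ι] (hP0 : P ∅)
    (hPun : ∀ A B : Set X, IsClosed A → IsClosed B → P A → P B → P (A ∪ B))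
    {C : ι → Set X} (hC : ∀ i, IsClosed (C i)) (hPC : ∀ i, P (C i)) : P (⋃ i, C i) := by
  suffices ∀ s : Set ι, s.Finite → P (⋃ i ∈ s, C i) by simpa using this univ finite_univ
  intro s hs
  induction s, hs using Set.Finite.induction_on with
  | empty => simpa using hP0
  | insert _ hs ih =>
    rw [biUnion_insert]
    exact hPun _ _ (hC _) (hs.isClosed_biUnion fun i _ => hC i) (hPC _) ih

theorem property_closure_of_forall_closure_inter {ι : Type*} [Finite ι] (hP0 : P ∅)
    (hPun : ∀ A B : Set X, IsClosed A → IsClosed B → P A → P B → P (A ∪ B))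
    {Xs : ι → Set X} (hcover : ⋃ i, Xs i = univ) {Z : Set X}
    (hZ : ∀ i, P (closure (Xs i ∩ Z))) : P (closure Z) := by
  have hZ_eq : Z = ⋃ i, Xs i ∩ Z := by rw [← iUnion_inter, hcover, univ_inter]
  rw [hZ_eq, closure_iUnion_of_finite]
  exact property_iUnion_of_finite hP0 hPun (fun _ => isClosed_closure) hZ

theorem property_closure_inter_preimage_zero_or_one {T : Set X} (hT : IsClosed T)
    (hconn : ConnectedMod T {S : Set T | P ((Subtype.val : T → X) '' closure S)})
    (hPher : ∀ A B : Set X, A ⊆ B → IsClosed A → P B → P A)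
    {f : X → ℝ} (hfc : Continuous f) (hfr : ∀ x, f x ∈ Icc (0 : ℝ) 1)
    (hfm : P (closure (f ⁻¹' {0} ∪ f ⁻¹' {1})ᶜ)) :
    P (closure (T ∩ f ⁻¹' {0})) ∨ P (closure (T ∩ f ⁻¹' {1})) := by
  by_contra! h
  refine hconn ⟨f ∘ Subtype.val, hfc.comp continuous_subtype_val, fun _ => hfr _, ?_, ?_, ?_⟩
  · simpa only [mem_ofPred_eq, preimage_comp, hT.image_val_closure_preimage] using h.1
  · simpa only [mem_ofPred_eq, preimage_comp, hT.image_val_closure_preimage] using h.2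
  · rw [mem_ofPred_eq, preimage_comp, preimage_comp, ← preimage_union, ← preimage_compl,
      hT.image_val_closure_preimage]
    exact hPher _ _ (closure_mono inter_subset_right) isClosed_closure hfm

end Property

theorem connectedMod_property_of_finite_union_general {X : Type*} [TopologicalSpace X]
    (P : Set X → Prop)
    (hP0 : P ∅)
    (hPher : ∀ A B : Set X, A ⊆ B → IsClosed A → P B → P A)
    (hPun : ∀ A B : Set X, IsClosed A → IsClosed B → P A → P B → P (A ∪ B))
    (n : ℕ) (Xs : Fin n → Set X)
    (hcl : ∀ i, IsClosed (Xs i))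
    (hcover : ⋃ i, Xs i = Set.univ)
    (hconn : ∀ i, ConnectedMod ↥(Xs i)
      {S : Set ↥(Xs i) | P ((Subtype.val : ↥(Xs i) → X) '' closure S)})
    (hAnP : ¬ P (⋂ i, Xs i)) :
    ConnectedMod X {H : Set X | P (closure H)} := by
  rintro ⟨f, hfc, hfr, hf0, hf1, hfm⟩
  have hdich i := property_closure_inter_preimage_zero_or_one (hcl i) (hconn i) hPher hfc hfr hfm
  obtain ⟨i, hi⟩ : ∃ i, ¬ P (closure (Xs i ∩ f ⁻¹' {0})) := by
    by_contra! h
    exact hf0 (property_closure_of_forall_closure_inter hP0 hPun hcover h)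
  obtain ⟨j, hj⟩ : ∃ j, ¬ P (closure (Xs j ∩ f ⁻¹' {1})) := by
    by_contra! h
    exact hf1 (property_closure_of_forall_closure_inter hP0 hPun hcover h)
  have hA_sub : (⋂ k, Xs k) ⊆ closure (Xs j ∩ f ⁻¹' {0}) ∪
      (closure (Xs i ∩ f ⁻¹' {1}) ∪ closure (f ⁻¹' {0} ∪ f ⁻¹' {1})ᶜ) := by
    intro x hx
    rw [mem_iInter] at hx
    by_cases h0 : f x = 0
    · exact Or.inl (subset_closure ⟨hx j, h0⟩)
    by_cases h1 : f x = 1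
    · exact Or.inr (Or.inl (subset_closure ⟨hx i, h1⟩))
    · exact Or.inr (Or.inr (subset_closure (by simp [h0, h1])))
  exact hAnP <| hPher _ _ hA_sub (isClosed_iInter hcl) <|
    hPun _ _ isClosed_closure (isClosed_closure.union isClosed_closure) ((hdich j).resolve_right hj)
      (hPun _ _ isClosed_closure isClosed_closure ((hdich i).resolve_left hi) hfm)

/-- Let `P` be a property of subsets of `X` making `𝓗_P(X) = {H : P (cl_X H)}` an ideal.
If `X = X₁ ∪ ⋯ ∪ Xₙ` with each `Xᵢ` closed and connected modulo `𝓗_P(Xᵢ)`, and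
`A = X₁ ∩ ⋯ ∩ Xₙ` is connected modulo `𝓗_P(A)` and does not have `P`, then `X` is
connected modulo `𝓗_P(X)`. (For `S` a subset of a closed subspace `T`, `cl_T S` is
identified with its image in `X`.) -/
theorem connectedMod_property_of_finite_union {X : Type*} [TopologicalSpace X]
    (P : Set X → Prop)
    (hP0 : P ∅)
    (hPher : ∀ A B : Set X, A ⊆ B → IsClosed A → P B → P A)
    (hPun : ∀ A B : Set X, IsClosed A → IsClosed B → P A → P B → P (A ∪ B))
    (n : ℕ) (hn : 0 < n) (Xs : Fin n → Set X)
    (hcl : ∀ i, IsClosed (Xs i))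
    (hcover : ⋃ i, Xs i = Set.univ)
    (hconn : ∀ i, ConnectedMod ↥(Xs i)
      {S : Set ↥(Xs i) | P ((Subtype.val : ↥(Xs i) → X) '' closure S)})
    (hA : ConnectedMod ↥(⋂ i, Xs i)
      {S : Set ↥(⋂ i, Xs i) | P ((Subtype.val : ↥(⋂ i, Xs i) → X) '' closure S)})
    (hAnP : ¬ P (⋂ i, Xs i)) :
    ConnectedMod X {H : Set X | P (closure H)} :=
  connectedMod_property_of_finite_union_general P hP0 hPher hPun n Xs hcl hcover hconn hAnP
end

section
/- Let X be a topological space and let P be a property of subsets of X such that: the empty set has P; whenever B ⊆ X has P, A ⊆ B, and A is closed in X, then A has P; and whenever A and B are closed subsets of X both having P, then A ∪ B has P, so that 𝓗_P(X) = {H ⊆ X : cl_X H has P} is an ideal in X. Then the following are equivalent: (1) X is connected modulo 𝓗_P(X); (2) there is no pair C, D of disjoint cozero-sets of X such that neither cl_X C nor cl_X D has P, and X \ (C ∪ D) is contained in a cozero-set E of X such that cl_X E has P. -/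
open Set Topology

/-- A cozero-set in `X`: a set of the form `{x : f x ≠ 0}` for a continuous
`f : X → [0,1]`. -/
def IsCozeroSet {X : Type*} [TopologicalSpace X] (C : Set X) : Prop :=
  ∃ f : X → ℝ, Continuous f ∧ (∀ x, f x ∈ Set.Icc (0 : ℝ) 1) ∧ C = {x | f x ≠ 0}

/-!
If `f` is 2-valued modulo `𝓗_P(X)`, then `{f < 1/3}`, `{f > 2/3}` and `{0 < f < 1}` are cozero-sets
forming a forbidden separation. Conversely, if `C`, `D`, `E` are the cozero-sets of `g`, `h`, `e`,
then `h / (g + h + e)` vanishes on `C`, equals `1` on `D \ E`, and takes values other than `0`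
and `1` only in `E`; since `cl_X D ⊆ cl_X f⁻¹(1) ∪ cl_X E`, it is 2-valued modulo `𝓗_P(X)`.
-/

section

variable {X : Type*} [TopologicalSpace X]

namespace IsCozeroSet

lemma setOf_ne_zero {u : X → ℝ} (hu : Continuous u) : IsCozeroSet {x | u x ≠ 0} := by
  refine ⟨fun x => min |u x| 1, by fun_prop,
    fun x => ⟨le_min (abs_nonneg _) zero_le_one, min_le_right _ _⟩, ?_⟩
  ext x
  rw [mem_ofPred_eq, mem_ofPred_eq, ← (le_min (abs_nonneg (u x)) zero_le_one).lt_iff_ne',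
    lt_min_iff, abs_pos]
  simp

lemma setOf_lt {u v : X → ℝ} (hu : Continuous u) (hv : Continuous v) :
    IsCozeroSet {x | u x < v x} := by
  convert setOf_ne_zero (by fun_prop : Continuous fun x => max (v x - u x) 0) using 2 with x
  simp

lemma compl_preimage_zero_union_preimage_one {f : X → ℝ} (hf : Continuous f) :
    IsCozeroSet (f ⁻¹' {0} ∪ f ⁻¹' {1})ᶜ := by
  convert setOf_ne_zero (by fun_prop : Continuous fun x => f x * (1 - f x)) using 1
  ext x
  simp only [mem_compl_iff, mem_union, mem_preimage, mem_singleton_iff, not_or,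
    mem_ofPred_eq, mul_ne_zero_iff, sub_ne_zero, ne_comm (a := (1 : ℝ))]

end IsCozeroSet

lemma exists_continuous_of_cozero_cover {C D E : Set X} (hC : IsCozeroSet C)
    (hD : IsCozeroSet D) (hE : IsCozeroSet E) (hCD : Disjoint C D) (hcover : (C ∪ D)ᶜ ⊆ E) :
    ∃ f : X → ℝ, Continuous f ∧ (∀ x, f x ∈ Icc (0 : ℝ) 1) ∧
      C ⊆ f ⁻¹' {0} ∧ D \ E ⊆ f ⁻¹' {1} ∧ (f ⁻¹' {0} ∪ f ⁻¹' {1})ᶜ ⊆ E := by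
  obtain ⟨g, hg, hg01, rfl⟩ := hC
  obtain ⟨h, hh, hh01, rfl⟩ := hD
  obtain ⟨e, he, he01, rfl⟩ := hE
  have hpos : ∀ x, 0 < g x + h x + e x := by
    intro x
    by_contra! hle
    have := (hg01 x).1; have := (hh01 x).1; have := (he01 x).1
    have hx : x ∈ ({x | g x ≠ 0} ∪ {x | h x ≠ 0})ᶜ := by
      simp only [mem_compl_iff, mem_union, mem_ofPred_eq, not_or, not_not]
      constructor <;> linarith
    exact hcover hx (by linarith)
  have hC0 : {x | g x ≠ 0} ⊆ (fun x => h x / (g x + h x + e x)) ⁻¹' {0} := by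
    intro x hx
    simp [of_not_not (hCD.notMem_of_mem_left hx)]
  have hD1 : {x | h x ≠ 0} \ {x | e x ≠ 0} ⊆ (fun x => h x / (g x + h x + e x)) ⁻¹' {1} := by
    rintro x ⟨hx, hxE⟩
    simp_all [of_not_not (hCD.notMem_of_mem_right hx)]
  refine ⟨fun x => h x / (g x + h x + e x), hh.div (by fun_prop) (fun x => (hpos x).ne'),
    fun x => ⟨div_nonneg (hh01 x).1 (hpos x).le, ?_⟩, hC0, hD1, ?_⟩
  · rw [div_le_one (hpos x)]
    linarith [(hg01 x).1, (he01 x).1]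
  · intro x hx
    by_contra hxE
    rcases notMem_compl_iff.mp (mt (@hcover x) hxE) with hxC | hxD
    · exact hx (Or.inl (hC0 hxC))
    · exact hx (Or.inr (hD1 ⟨hxD, hxE⟩))

lemma exists_cozero_cover_of_continuous {f : X → ℝ} (hf : Continuous f) :
    ∃ C D : Set X, IsCozeroSet C ∧ IsCozeroSet D ∧ Disjoint C D ∧
      f ⁻¹' {0} ⊆ C ∧ f ⁻¹' {1} ⊆ D ∧ (C ∪ D)ᶜ ⊆ (f ⁻¹' {0} ∪ f ⁻¹' {1})ᶜ := by
  refine ⟨{x | f x < 1 / 3}, {x | 2 / 3 < f x}, .setOf_lt hf continuous_const,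
    .setOf_lt continuous_const hf, ?_, fun x (hx : f x = 0) => by norm_num [hx],
    fun x (hx : f x = 1) => by norm_num [hx], ?_⟩
  · exact disjoint_left.mpr fun x hC hD => by simp only [mem_ofPred_eq] at hC hD; linarith
  · intro x hx
    simp only [mem_compl_iff, mem_union, mem_ofPred_eq, not_or, not_lt] at hx
    simp only [mem_compl_iff, mem_union, mem_preimage, mem_singleton_iff, not_or]
    constructor <;> intro hfx <;> linarith [hx.1, hx.2]

end

theorem connectedMod_property_iff_no_cozero_separation_general {X : Type*} [TopologicalSpace X]
    (P : Set X → Prop)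
    (hPher : ∀ A B : Set X, A ⊆ B → IsClosed A → P B → P A)
    (hPun : ∀ A B : Set X, IsClosed A → IsClosed B → P A → P B → P (A ∪ B)) :
    ConnectedMod X {H : Set X | P (closure H)} ↔
      ¬ ∃ C D : Set X, IsCozeroSet C ∧ IsCozeroSet D ∧ Disjoint C D ∧
        ¬ P (closure C) ∧ ¬ P (closure D) ∧
        ∃ E : Set X, IsCozeroSet E ∧ P (closure E) ∧ (C ∪ D)ᶜ ⊆ E := by
  have mono : ∀ {A B : Set X}, A ⊆ B → P (closure B) → P (closure A) := fun hAB =>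
    hPher _ _ (closure_mono hAB) isClosed_closure
  have union : ∀ {A B : Set X}, P (closure A) → P (closure B) → P (closure (A ∪ B)) :=
    fun hA hB => by rw [closure_union]; exact hPun _ _ isClosed_closure isClosed_closure hA hB
  constructor
  · rintro hconn ⟨C, D, hC, hD, hCD, hPC, hPD, E, hE, hPE, hcover⟩
    obtain ⟨f, hf, hf01, hC0, hD1, hmid⟩ :=
      exists_continuous_of_cozero_cover hC hD hE hCD hcover
    exact hconn ⟨f, hf, hf01, fun h0 => hPC (mono hC0 h0),
      fun h1 => hPD (mono (sdiff_subset_iff.mp hD1) (union hPE h1)), mono hmid hPE⟩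
  · rintro hsep ⟨f, hf, -, h0, h1, hmid⟩
    obtain ⟨C, D, hC, hD, hCD, hC0, hD1, hcover⟩ := exists_cozero_cover_of_continuous hf
    exact hsep ⟨C, D, hC, hD, hCD, fun hPC => h0 (mono hC0 hPC), fun hPD => h1 (mono hD1 hPD),
      _, .compl_preimage_zero_union_preimage_one hf, hmid, hcover⟩

/-- Let `P` be a property of subsets of `X` making `𝓗_P(X) = {H : P (cl_X H)}` an ideal.
Then `X` is connected modulo `𝓗_P(X)` iff there is no pair `C`, `D` of disjoint
cozero-sets of `X` such that neither `cl_X C` nor `cl_X D` has `P` and `X \ (C ∪ D)` is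
contained in a cozero-set `E` with `cl_X E` having `P`. -/
theorem connectedMod_property_iff_no_cozero_separation {X : Type*} [TopologicalSpace X]
    (P : Set X → Prop)
    (hP0 : P ∅)
    (hPher : ∀ A B : Set X, A ⊆ B → IsClosed A → P B → P A)
    (hPun : ∀ A B : Set X, IsClosed A → IsClosed B → P A → P B → P (A ∪ B)) :
    ConnectedMod X {H : Set X | P (closure H)} ↔
      ¬ ∃ C D : Set X, IsCozeroSet C ∧ IsCozeroSet D ∧ Disjoint C D ∧
        ¬ P (closure C) ∧ ¬ P (closure D) ∧
        ∃ E : Set X, IsCozeroSet E ∧ P (closure E) ∧ (C ∪ D)ᶜ ⊆ E :=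
  connectedMod_property_iff_no_cozero_separation_general P hPher hPun
end

section
/- Let X be a Tychonoff (completely regular Hausdorff) space, let βX be its Stone–Čech compactification (with X identified with its image), and let υX = ⋂{C : C is a cozero-set of βX containing X} be the Hewitt realcompactification of X inside βX. Then for an open subset U of X, the closure cl_X U is pseudocompact if and only if cl_{βX} U ⊆ υX. -/
/-! `cl_{βX} S ⊆ υX` says exactly that every continuous real function on `X` is bounded on `S`:
a cozero-set `{G ≠ 0} ⊇ X` missing a point of `cl_{βX} S` makes `1 / G` unbounded on `S`, and
if `f` is unbounded on `S`, the extension of `1 / (1 + |f|)` to `βX` is positive on `X` but, by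
compactness, vanishes somewhere on `cl_{βX} S`. Pseudocompactness of `cl_X U` gives this
boundedness for `U`. Conversely, if `f` is continuous and unbounded on `cl_X U`, the sets
`U ∩ {|f| > n}` form a locally finite sequence of nonempty open subsets of `X`, and a locally
finite sum of bump functions supported in them is continuous on `X` and unbounded on `U`. -/

open Set Topology

/-- A subset `S` of `X` is pseudocompact if every continuous real-valued function on the
subspace `S` is bounded. -/
def IsPseudocompactSet {X : Type*} [TopologicalSpace X] (S : Set X) : Prop :=
  ∀ f : ↥S → ℝ, Continuous f → ∃ M : ℝ, ∀ y : ↥S, |f y| ≤ M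

/-- The Hewitt realcompactification `υX` of `X` inside `βX`: the intersection of all
cozero-sets of `βX` containing the image of `X`. -/
def upsilonSet (X : Type*) [TopologicalSpace X] : Set (StoneCech X) :=
  ⋂₀ {C : Set (StoneCech X) |
    (∃ g : StoneCech X → ℝ, Continuous g ∧ C = {p | g p ≠ 0}) ∧
      Set.range (stoneCechUnit : X → StoneCech X) ⊆ C}

section LocallyFinite

variable {X Y : Type*} [TopologicalSpace X] [TopologicalSpace Y]

theorem Topology.IsClosedEmbedding.locallyFinite_image {ι : Type*} {e : Y → X}
    (he : IsClosedEmbedding e) {f : ι → Set Y} (hf : LocallyFinite f) :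
    LocallyFinite fun i => e '' f i := by
  intro x
  by_cases hx : x ∈ range e
  · obtain ⟨y, rfl⟩ := hx
    obtain ⟨t, ht, hfin⟩ := hf y
    rw [he.isInducing.nhds_eq_comap, Filter.mem_comap] at ht
    obtain ⟨t', ht', hsub⟩ := ht
    refine ⟨t', ht', hfin.subset ?_⟩
    rintro i ⟨-, ⟨z, hz, rfl⟩, hzt⟩
    exact ⟨z, hz, hsub hzt⟩
  · refine ⟨(range e)ᶜ, he.isClosed_range.isOpen_compl.mem_nhds hx, finite_empty.subset ?_⟩
    rintro i ⟨-, ⟨z, -, rfl⟩, hz⟩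
    exact hz ⟨z, rfl⟩

theorem locallyFinite_setOf_natCast_lt_abs {f : Y → ℝ} (hf : Continuous f) :
    LocallyFinite fun n : ℕ => {y | (n : ℝ) < |f y|} := by
  intro y
  refine ⟨{z | |f z| < ⌈|f y|⌉₊ + 1}, (isOpen_lt hf.abs continuous_const).mem_nhds ?_,
    (finite_Iio (⌈|f y|⌉₊ + 1)).subset ?_⟩
  · exact (Nat.le_ceil |f y|).trans_lt (lt_add_one (⌈|f y|⌉₊ : ℝ))
  · rintro n ⟨z, hn, hz⟩
    exact_mod_cast (show (n : ℝ) < ⌈|f y|⌉₊ + 1 from hn.trans hz)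

theorem exists_continuous_natCast_le_of_locallyFinite [CompletelyRegularSpace X]
    {W : ℕ → Set X} (hWo : ∀ n, IsOpen (W n)) (hW : LocallyFinite W) {x : ℕ → X}
    (hx : ∀ n, x n ∈ W n) :
    ∃ F : X → ℝ, Continuous F ∧ ∀ n : ℕ, (n : ℝ) ≤ F (x n) := by
  choose g hgc hgx hgW using fun n => CompletelyRegularSpace.completely_regular_isOpen
    (x n) (W n) (hWo n) (hx n)
  set b : ℕ → X → ℝ := fun n y => n * (1 - g n y)
  have hb_nonneg : ∀ n y, 0 ≤ b n y := fun n y =>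
    mul_nonneg n.cast_nonneg (sub_nonneg.2 (g n y).2.2)
  have hb_support : ∀ n, Function.support (b n) ⊆ W n := by
    intro n y hy
    by_contra hyW
    exact hy (by simp [b, hgW n hyW])
  refine ⟨fun y => ∑ᶠ n, b n y,
    continuous_finsum (fun n => by fun_prop) (hW.subset hb_support), fun n => ?_⟩
  calc (n : ℝ) = b n (x n) := by simp [b, hgx n]
    _ ≤ ∑ᶠ k, b k (x n) := single_le_finsum n
        ((hW.point_finite (x n)).subset fun k hk => hb_support k hk) (hb_nonneg · (x n))

end LocallyFinite

section Pseudocompact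

variable {X : Type*} [TopologicalSpace X]

def IsRelativelyPseudocompact (S : Set X) : Prop :=
  ∀ f : X → ℝ, Continuous f → ∃ M : ℝ, ∀ x ∈ S, |f x| ≤ M

theorem IsPseudocompactSet.isRelativelyPseudocompact {S : Set X} (hS : IsPseudocompactSet S) :
    IsRelativelyPseudocompact S := fun _ hf =>
  (hS _ (hf.comp continuous_subtype_val)).imp fun _ hM x hx => hM ⟨x, hx⟩

theorem IsRelativelyPseudocompact.mono {S T : Set X} (hT : IsRelativelyPseudocompact T)
    (hST : S ⊆ T) : IsRelativelyPseudocompact S := fun f hf =>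
  (hT f hf).imp fun _ hM x hx => hM x (hST hx)

theorem IsRelativelyPseudocompact.isPseudocompactSet_closure [CompletelyRegularSpace X]
    {U : Set X} (hUo : IsOpen U) (hU : IsRelativelyPseudocompact U) :
    IsPseudocompactSet (closure U) := by
  intro f hf
  by_contra! hunbdd
  choose V hVo hV using fun n : ℕ =>
    isOpen_induced_iff.1 (isOpen_lt continuous_const hf.abs : IsOpen {y | (n : ℝ) < |f y|})
  have hW : LocallyFinite fun n => U ∩ V n := by
    refine (isClosed_closure.isClosedEmbedding_subtypeVal.locallyFinite_image
      (locallyFinite_setOf_natCast_lt_abs hf)).subset fun n z hz => ?_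
    refine ⟨⟨z, subset_closure hz.1⟩, ?_, rfl⟩
    rw [← hV n]
    exact hz.2
  have hWne : ∀ n, (U ∩ V n).Nonempty := by
    intro n
    obtain ⟨y, hy⟩ := hunbdd n
    have hyV : (y : X) ∈ V n := by rw [← mem_preimage, hV n]; exact hy
    obtain ⟨z, hzV, hzU⟩ := mem_closure_iff.1 y.2 (V n) (hVo n) hyV
    exact ⟨z, hzU, hzV⟩
  choose x hx using hWne
  obtain ⟨F, hFc, hFx⟩ := exists_continuous_natCast_le_of_locallyFinite
    (fun n => hUo.inter (hVo n)) hW hx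
  obtain ⟨M, hM⟩ := hU F hFc
  obtain ⟨n, hn⟩ := exists_nat_gt M
  linarith [hM (x n) (hx n).1, hFx n, le_abs_self (F (x n))]

end Pseudocompact

section StoneCech

variable {X : Type*} [TopologicalSpace X]

theorem closure_stoneCechUnit_image_subset_upsilonSet {S : Set X}
    (hS : IsRelativelyPseudocompact S) : closure (stoneCechUnit '' S) ⊆ upsilonSet X := by
  rintro p hp C ⟨⟨G, hG, rfl⟩, hXC⟩
  have hG0 : ∀ x, G (stoneCechUnit x) ≠ 0 := fun x => hXC ⟨x, rfl⟩
  obtain ⟨M, hM⟩ := hS (fun x => (G (stoneCechUnit x))⁻¹)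
    ((hG.comp continuous_stoneCechUnit).inv₀ hG0)
  have hbound : stoneCechUnit '' S ⊆ {q | 1 ≤ |G q| * M} := by
    rintro _ ⟨x, hx, rfl⟩
    rw [mem_ofPred_eq, ← inv_le_iff_one_le_mul₀' (abs_pos.2 (hG0 x)), ← abs_inv]
    exact hM x hx
  have hp1 : 1 ≤ |G p| * M :=
    (isClosed_le continuous_const (hG.abs.mul continuous_const)).closure_subset_iff.2 hbound hp
  intro hGp
  norm_num [hGp] at hp1

theorem IsRelativelyPseudocompact.of_closure_stoneCechUnit_image_subset_upsilonSet {S : Set X}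
    (hS : closure (stoneCechUnit '' S) ⊆ upsilonSet X) : IsRelativelyPseudocompact S := by
  intro f hf
  let h : X → Icc (0 : ℝ) 1 := fun x =>
    ⟨(1 + |f x|)⁻¹, by positivity, inv_le_one_of_one_le₀ (le_add_of_nonneg_right (abs_nonneg _))⟩
  have hh : Continuous h :=
    ((hf.abs.const_add 1).inv₀ fun x => by positivity).subtype_mk _
  let G : StoneCech X → ℝ := fun p => (stoneCechExtend hh p : Icc (0 : ℝ) 1)
  have hGc : Continuous G := continuous_subtype_val.comp (continuous_stoneCechExtend hh)
  have hGunit : ∀ x, G (stoneCechUnit x) = (1 + |f x|)⁻¹ := fun x => by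
    simp only [G, stoneCechExtend_stoneCechUnit, h]
  have hXG : range stoneCechUnit ⊆ {p | G p ≠ 0} := by
    rintro _ ⟨x, rfl⟩
    rw [mem_ofPred_eq, hGunit]
    positivity
  have hGpos : ∀ p ∈ closure (stoneCechUnit '' S), 0 < G p := fun p hp =>
    (stoneCechExtend hh p).2.1.lt_of_ne' (hS hp _ ⟨⟨G, hGc, rfl⟩, hXG⟩)
  obtain ⟨ε, hε, hεG⟩ := isClosed_closure.isCompact.exists_forall_le' hGc.continuousOn hGpos
  refine ⟨ε⁻¹, fun x hx => ?_⟩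
  have hεx : ε ≤ (1 + |f x|)⁻¹ := hGunit x ▸ hεG _ (subset_closure ⟨x, hx, rfl⟩)
  linarith [(le_inv_comm₀ hε (by positivity)).1 hεx]

theorem closure_stoneCechUnit_image_subset_upsilonSet_iff {S : Set X} :
    closure (stoneCechUnit '' S) ⊆ upsilonSet X ↔ IsRelativelyPseudocompact S :=
  ⟨.of_closure_stoneCechUnit_image_subset_upsilonSet, closure_stoneCechUnit_image_subset_upsilonSet⟩

end StoneCech

/-- For an open subset `U` of a Tychonoff space `X`, the closure `cl_X U` is pseudocompact
iff `cl_{βX} U ⊆ υX`. -/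
theorem pseudocompact_closure_iff_closure_subset_upsilon {X : Type*} [TopologicalSpace X]
    [T35Space X] (U : Set X) (hU : IsOpen U) :
    IsPseudocompactSet (closure U) ↔
      closure (stoneCechUnit '' U) ⊆ upsilonSet X := by
  rw [closure_stoneCechUnit_image_subset_upsilonSet_iff]
  exact ⟨fun h => h.isRelativelyPseudocompact.mono subset_closure,
    fun h => h.isPseudocompactSet_closure hU⟩
end

section
/- Let X be a Tychonoff (completely regular Hausdorff) space, let βX be its Stone–Čech compactification (with X identified with its image), and let υX = ⋂{C : C is a cozero-set of βX containing X}. Let 𝓤_X be the ideal in X generated by the open subsets of X whose closures are pseudocompact. Then X is connected modulo 𝓤_X if and only if cl_{βX}(βX \ υX) is preconnected (i.e., it cannot be written as the union of two nonempty separated subsets). -/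
open Set Topology

/-!
For an open `W ⊆ X`, `cl_X W` is pseudocompact iff `cl_{βX} W ⊆ υX`. If `A` is pseudocompact,
every continuous `g` on `βX` without zeros on `X` is bounded away from `0` on `A` (since `1 / g`
is bounded there), hence has no zeros on `cl_{βX} A`. If `cl_X W` is not pseudocompact, a locally
finite sequence of nonempty open subsets of `W` carries a continuous `g ≥ 0` unbounded on `W`,
and the extension of `1 / (1 + g)` to `βX` has a zero on the compact set `cl_{βX} W` but none
on `X`.

Hence, with `K = cl_{βX}(βX \ υX)`, an open `W ⊆ X` lies in `𝓤_X` as soon as its `βX`-closure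
misses `K`, while an open `O ⊆ βX` meeting `K` never has its trace on `X` in `𝓤_X`. Through
Stone–Čech extension, a function that is 2-valued modulo `𝓤_X` thus becomes a function on `βX`
taking only the values `0` and `1` on `K`, and both of them; conversely, a Urysohn function
separating the two halves of a disconnection of `K` yields a 2-valued function modulo `𝓤_X`.
-/

def pseudocompactIdeal (X : Type*) [TopologicalSpace X] : Set (Set X) :=
  GenIdeal {U : Set X | IsOpen U ∧ IsPseudocompactSet (closure U)}

section GenIdeal

variable {α : Type*} {𝓐 : Set (Set α)}

theorem mem_genIdeal_of_mem {A : Set α} (hA : A ∈ 𝓐) : A ∈ GenIdeal 𝓐 :=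
  ⟨{A}, singleton_subset_iff.2 hA, finite_singleton A, by simp⟩

theorem mem_genIdeal_of_subset {S T : Set α} (hST : S ⊆ T) (hT : T ∈ GenIdeal 𝓐) :
    S ∈ GenIdeal 𝓐 :=
  let ⟨𝓑, h𝓑, hfin, hT𝓑⟩ := hT
  ⟨𝓑, h𝓑, hfin, hST.trans hT𝓑⟩

end GenIdeal

section StoneCech

open Function

variable {X : Type*} [TopologicalSpace X]

theorem IsPseudocompactSet.exists_pos_le_abs {S : Set X} (hS : IsPseudocompactSet S)
    {g : S → ℝ} (hg : Continuous g) (hg0 : ∀ y, g y ≠ 0) : ∃ ε > 0, ∀ y, ε ≤ |g y| := by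
  obtain ⟨M, hM⟩ := hS _ (hg.inv₀ hg0)
  refine ⟨(max M 1)⁻¹, by positivity, fun y => inv_le_of_inv_le₀ (abs_pos.2 (hg0 y)) ?_⟩
  rw [← abs_inv]
  exact (hM y).trans (le_max_left M 1)

theorem exists_continuousOn_unbounded_of_not_isPseudocompactSet {S : Set X}
    (hS : ¬ IsPseudocompactSet S) : ∃ g : X → ℝ, ContinuousOn g S ∧ ∀ M, ∃ y ∈ S, M < |g y| := by
  simp only [IsPseudocompactSet, not_forall, not_exists, not_le] at hS
  obtain ⟨φ, hφ, hφM⟩ := hS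
  have hextend : ∀ y : S, extend Subtype.val φ 0 y = φ y :=
    Subtype.val_injective.extend_apply φ 0
  refine ⟨extend Subtype.val φ 0, ?_, fun M => ?_⟩
  · rw [continuousOn_iff_continuous_domRestrict]
    exact hφ.congr fun y => (hextend y).symm
  · obtain ⟨y, hy⟩ := hφM M
    exact ⟨y, y.2, by rwa [hextend]⟩

theorem exists_locallyFinite_of_not_isPseudocompactSet_closure {W : Set X} (hW : IsOpen W)
    (hWc : ¬ IsPseudocompactSet (closure W)) :
    ∃ Ω : ℕ → Set X, (∀ n, IsOpen (Ω n)) ∧ (∀ n, (Ω n).Nonempty) ∧ (∀ n, Ω n ⊆ W) ∧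
      LocallyFinite Ω := by
  obtain ⟨g, hg, hgM⟩ := exists_continuousOn_unbounded_of_not_isPseudocompactSet hWc
  set q : X → ℝ := fun x => |g x|
  have hq : ContinuousOn q (closure W) := hg.abs
  have hq_nhds : ∀ y ∈ closure W, ∀ I ∈ 𝓝 (q y), ∃ u, IsOpen u ∧ y ∈ u ∧ u ∩ closure W ⊆ q ⁻¹' I :=
    fun y hy I hI => mem_nhdsWithin.1 ((hq y hy).preimage_mem_nhdsWithin hI)
  have hW_unbounded : ∀ n : ℕ, ∃ x ∈ W, (n : ℝ) < q x := by
    intro n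
    obtain ⟨y, hy, hny⟩ := hgM n
    obtain ⟨u, hu, hyu, huq⟩ := hq_nhds y hy _ (Ioi_mem_nhds hny)
    obtain ⟨x, hxu, hxW⟩ := mem_closure_iff.1 hy u hu hyu
    exact ⟨x, hxW, huq ⟨hxu, subset_closure hxW⟩⟩
  choose x hxW hxq using hW_unbounded
  -- `Ω n` only sees values of `q` near `q (x n) > n`, so a neighbourhood of bounded `q` meets few.
  refine ⟨fun n => W ∩ q ⁻¹' Ioo (q (x n) - 1) (q (x n) + 1),
    fun n => (hq.mono subset_closure).isOpen_inter_preimage hW isOpen_Ioo,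
    fun n => ⟨x n, hxW n, sub_one_lt _, lt_add_one _⟩, fun n => inter_subset_left, fun y => ?_⟩
  by_cases hy : y ∈ closure W
  · obtain ⟨u, hu, hyu, huq⟩ :=
      hq_nhds y hy _ (Ioo_mem_nhds (sub_one_lt (q y)) (lt_add_one (q y)))
    refine ⟨u, hu.mem_nhds hyu, (finite_lt_nat ⌈q y + 2⌉₊).subset ?_⟩
    rintro n ⟨z, ⟨hzW, hzn⟩, hzu⟩
    have hzy := huq ⟨hzu, subset_closure hzW⟩
    simp only [mem_preimage, mem_Ioo] at hzn hzy
    exact Nat.lt_ceil.2 (by linarith [hxq n])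
  · refine ⟨(closure W)ᶜ, isClosed_closure.isOpen_compl.mem_nhds hy,
      finite_empty.subset ?_⟩
    rintro n ⟨z, ⟨hzW, -⟩, hz⟩
    exact hz (subset_closure hzW)

theorem exists_continuous_nonneg_unbounded_of_locallyFinite [CompletelyRegularSpace X]
    {Ω : ℕ → Set X} (hΩo : ∀ n, IsOpen (Ω n)) (hΩne : ∀ n, (Ω n).Nonempty)
    (hΩ : LocallyFinite Ω) :
    ∃ g : X → ℝ, Continuous g ∧ (∀ x, 0 ≤ g x) ∧ ∀ n : ℕ, ∃ x ∈ Ω n, (n : ℝ) ≤ g x := by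
  choose x hx using hΩne
  choose b hbc hb0 hb1 using fun n =>
    CompletelyRegularSpace.completely_regular (x n) (Ω n)ᶜ (hΩo n).isClosed_compl (not_not.2 (hx n))
  set u : ℕ → X → ℝ := fun n y => n * (1 - b n y)
  have hu0 : ∀ n y, 0 ≤ u n y := fun n y => mul_nonneg n.cast_nonneg (sub_nonneg.2 (b n y).2.2)
  have hsupp : ∀ n, support (u n) ⊆ Ω n := fun n y hy =>
    by_contra fun hyΩ => hy (by simp [u, hb1 n hyΩ])
  refine ⟨fun y => ∑ᶠ n, u n y, continuous_finsum (fun n => by fun_prop) (hΩ.subset hsupp),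
    fun y => finsum_nonneg (hu0 · y), fun n => ⟨x n, hx n, ?_⟩⟩
  calc (n : ℝ) = u n (x n) := by simp [u, hb0 n]
    _ ≤ ∑ᶠ m, u m (x n) :=
      single_le_finsum n ((hΩ.point_finite (x n)).subset fun m hm => hsupp m hm) (hu0 · (x n))

theorem exists_stoneCech_extension_Icc {f : X → ℝ} (hf : Continuous f)
    (hf01 : ∀ x, f x ∈ Icc (0 : ℝ) 1) :
    ∃ F : StoneCech X → ℝ, Continuous F ∧ F ∘ stoneCechUnit = f ∧ ∀ p, F p ∈ Icc (0 : ℝ) 1 := by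
  have hf' : Continuous fun x => (⟨f x, hf01 x⟩ : Icc (0 : ℝ) 1) := hf.subtype_mk _
  exact ⟨fun p => ((stoneCechExtend hf' p : Icc (0 : ℝ) 1) : ℝ),
    continuous_subtype_val.comp (continuous_stoneCechExtend hf'),
    funext fun x => congrArg Subtype.val (congrFun (stoneCechExtend_extends hf') x),
    fun p => (stoneCechExtend hf' p).2⟩

theorem upsilonSet_subset_cozero {g : StoneCech X → ℝ} (hg : Continuous g)
    (hX : ∀ x, g (stoneCechUnit x) ≠ 0) : upsilonSet X ⊆ {p | g p ≠ 0} :=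
  sInter_subset_of_mem ⟨⟨g, hg, rfl⟩, range_subset_iff.2 hX⟩

theorem IsPseudocompactSet.closure_image_subset_upsilonSet {A : Set X}
    (hA : IsPseudocompactSet A) : closure (stoneCechUnit '' A) ⊆ upsilonSet X := by
  intro p hp
  rw [upsilonSet, mem_sInter]
  rintro C ⟨⟨g, hg, rfl⟩, hX⟩
  obtain ⟨ε, hε, hεg⟩ := hA.exists_pos_le_abs (g := fun a => g (stoneCechUnit a))
    (hg.comp (continuous_stoneCechUnit.comp continuous_subtype_val)) fun a => hX ⟨a, rfl⟩
  have hεp : ε ≤ |g p| :=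
    closure_minimal (t := {q | ε ≤ |g q|}) (image_subset_iff.2 fun a ha => hεg ⟨a, ha⟩)
      (isClosed_le continuous_const hg.abs) hp
  exact fun hp0 => hεp.not_gt (by rwa [show g p = 0 from hp0, abs_zero])

theorem not_closure_image_subset_upsilonSet_of_unbounded {A : Set X} {g : X → ℝ}
    (hg : Continuous g) (hg0 : ∀ x, 0 ≤ g x) (hgA : ∀ M, ∃ x ∈ A, M ≤ g x) :
    ¬ closure (stoneCechUnit '' A) ⊆ upsilonSet X := by
  intro hA
  have hpos : ∀ x, 0 < 1 + g x := fun x => by linarith [hg0 x]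
  obtain ⟨F, hFc, hFX, hF01⟩ := exists_stoneCech_extension_Icc (f := fun x => (1 + g x)⁻¹)
    ((continuous_const.add hg).inv₀ fun x => (hpos x).ne')
    fun x => ⟨(inv_pos.2 (hpos x)).le, inv_le_one_of_one_le₀ (by linarith [hg0 x])⟩
  have hFX' : ∀ x, F (stoneCechUnit x) = (1 + g x)⁻¹ := congrFun hFX
  obtain ⟨x₀, hx₀, -⟩ := hgA 0
  obtain ⟨p, hpA, hpmin⟩ := isClosed_closure.isCompact.exists_isMinOn
    ⟨_, subset_closure (mem_image_of_mem _ hx₀)⟩ hFc.continuousOn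
  have hFp : 0 < F p := (hF01 p).1.lt_of_ne' <|
    upsilonSet_subset_cozero hFc (fun x => by rw [hFX']; exact (inv_pos.2 (hpos x)).ne') (hA hpA)
  obtain ⟨x, hxA, hx⟩ := hgA (F p)⁻¹
  have hle : F p ≤ (1 + g x)⁻¹ :=
    hFX' x ▸ isMinOn_iff.1 hpmin _ (subset_closure (mem_image_of_mem _ hxA))
  exact hle.not_gt (inv_lt_of_inv_lt₀ hFp (by linarith))

theorem isPseudocompactSet_closure_of_closure_image_subset_upsilonSet
    [CompletelyRegularSpace X] {W : Set X} (hW : IsOpen W)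
    (hWυ : closure (stoneCechUnit '' W) ⊆ upsilonSet X) : IsPseudocompactSet (closure W) := by
  by_contra hWc
  obtain ⟨Ω, hΩo, hΩne, hΩW, hΩ⟩ := exists_locallyFinite_of_not_isPseudocompactSet_closure hW hWc
  obtain ⟨g, hg, hg0, hgΩ⟩ := exists_continuous_nonneg_unbounded_of_locallyFinite hΩo hΩne hΩ
  refine not_closure_image_subset_upsilonSet_of_unbounded hg hg0 (fun M => ?_) hWυ
  obtain ⟨n, hn⟩ := exists_nat_ge M
  obtain ⟨x, hx, hxn⟩ := hgΩ n
  exact ⟨x, hΩW n hx, hn.trans hxn⟩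

theorem closure_image_subset_upsilonSet_of_mem_pseudocompactIdeal {S : Set X}
    (hS : S ∈ pseudocompactIdeal X) : closure (stoneCechUnit '' S) ⊆ upsilonSet X := by
  obtain ⟨𝓑, h𝓑, hfin, hS𝓑⟩ := hS
  have hS_sub : stoneCechUnit '' S ⊆ ⋃ U ∈ 𝓑, stoneCechUnit '' closure U := by
    rintro _ ⟨x, hx, rfl⟩
    obtain ⟨U, hU, hxU⟩ := hS𝓑 hx
    exact mem_biUnion hU (mem_image_of_mem _ (subset_closure hxU))
  calc closure (stoneCechUnit '' S) ⊆ closure (⋃ U ∈ 𝓑, stoneCechUnit '' closure U) :=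
        closure_mono hS_sub
    _ = ⋃ U ∈ 𝓑, closure (stoneCechUnit '' closure U) := hfin.closure_biUnion _
    _ ⊆ upsilonSet X := iUnion₂_subset fun U hU =>
        (h𝓑 hU).2.closure_image_subset_upsilonSet

theorem disjoint_closure_compl_upsilonSet_of_preimage_mem {O : Set (StoneCech X)}
    (hO : IsOpen O) (hOX : stoneCechUnit ⁻¹' O ∈ pseudocompactIdeal X) :
    Disjoint O (closure (upsilonSet X)ᶜ) :=
  (disjoint_compl_right_iff_subset.2 <|
    (denseRange_stoneCechUnit.subset_closure_image_preimage_of_isOpen hO).trans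
      (closure_image_subset_upsilonSet_of_mem_pseudocompactIdeal hOX)).closure_right hO

theorem preimage_mem_pseudocompactIdeal_of_disjoint [CompletelyRegularSpace X]
    {O C : Set (StoneCech X)} (hO : IsOpen O) (hC : IsClosed C) (hOC : O ⊆ C)
    (hCK : Disjoint C (closure (upsilonSet X)ᶜ)) : stoneCechUnit ⁻¹' O ∈ pseudocompactIdeal X :=
  mem_genIdeal_of_mem ⟨hO.preimage continuous_stoneCechUnit,
    isPseudocompactSet_closure_of_closure_image_subset_upsilonSet
      (hO.preimage continuous_stoneCechUnit) <|
      (closure_minimal ((image_preimage_subset _ _).trans hOC) hC).trans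
        (disjoint_compl_right_iff_subset.1 (hCK.mono_right subset_closure))⟩

theorem exists_twoValuedMod_of_continuous_zero_one [CompletelyRegularSpace X]
    {H : StoneCech X → ℝ} (hH : Continuous H)
    (hHK : ∀ p ∈ closure (upsilonSet X)ᶜ, H p = 0 ∨ H p = 1)
    (h0 : ∃ p ∈ closure (upsilonSet X)ᶜ, H p = 0) (h1 : ∃ p ∈ closure (upsilonSet X)ᶜ, H p = 1) :
    ∃ f : X → ℝ, TwoValuedMod (pseudocompactIdeal X) f := by
  obtain ⟨a, haK, ha⟩ := h0
  obtain ⟨b, hbK, hb⟩ := h1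
  set c : ℝ → ℝ := fun t => max 0 (min 1 (3 * t - 1))
  have hcc : Continuous c := continuous_const.max
    (continuous_const.min ((continuous_const.mul continuous_id).sub continuous_const))
  have hc0 : ∀ t ≤ 1 / 3, c t = 0 := fun t ht => max_eq_left (min_le_of_right_le (by linarith))
  have hc1 : ∀ t, 2 / 3 ≤ t → c t = 1 := fun t ht => by
    simp only [c]
    rw [min_eq_left (by linarith), max_eq_right zero_le_one]
  refine ⟨c ∘ H ∘ stoneCechUnit, hcc.comp (hH.comp continuous_stoneCechUnit),
    fun x => ⟨le_max_left _ _, max_le zero_le_one (min_le_left _ _)⟩, fun hmem => ?_,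
    fun hmem => ?_, ?_⟩
  · have hsub : stoneCechUnit ⁻¹' (H ⁻¹' Iio (1 / 3)) ⊆ (c ∘ H ∘ stoneCechUnit) ⁻¹' {0} :=
      fun x hx => hc0 _ (le_of_lt hx)
    refine (disjoint_closure_compl_upsilonSet_of_preimage_mem (isOpen_Iio.preimage hH)
      (mem_genIdeal_of_subset hsub hmem)).notMem_of_mem_right haK ?_
    show H a < 1 / 3
    norm_num [ha]
  · have hsub : stoneCechUnit ⁻¹' (H ⁻¹' Ioi (2 / 3)) ⊆ (c ∘ H ∘ stoneCechUnit) ⁻¹' {1} :=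
      fun x hx => hc1 _ (le_of_lt hx)
    refine (disjoint_closure_compl_upsilonSet_of_preimage_mem (isOpen_Ioi.preimage hH)
      (mem_genIdeal_of_subset hsub hmem)).notMem_of_mem_right hbK ?_
    show 2 / 3 < H b
    norm_num [hb]
  · have hsub : ((c ∘ H ∘ stoneCechUnit) ⁻¹' {0} ∪ (c ∘ H ∘ stoneCechUnit) ⁻¹' {1})ᶜ ⊆
        stoneCechUnit ⁻¹' (H ⁻¹' Ioo (1 / 3) (2 / 3)) := fun x hx =>
      ⟨lt_of_not_ge fun h => hx (Or.inl (hc0 _ h)), lt_of_not_ge fun h => hx (Or.inr (hc1 _ h))⟩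
    have hK : Disjoint (H ⁻¹' Icc (1 / 3) (2 / 3)) (closure (upsilonSet X)ᶜ) := by
      rw [disjoint_left]
      rintro p ⟨hp1, hp2⟩ hpK
      rcases hHK p hpK with h | h <;> linarith
    exact mem_genIdeal_of_subset hsub (preimage_mem_pseudocompactIdeal_of_disjoint
      (isOpen_Ioo.preimage hH) (isClosed_Icc.preimage hH) (preimage_mono Ioo_subset_Icc_self) hK)

theorem isPreconnected_closure_compl_upsilonSet_of_connectedMod [CompletelyRegularSpace X]
    (hX : ConnectedMod X (pseudocompactIdeal X)) : IsPreconnected (closure (upsilonSet X)ᶜ) := by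
  rw [isPreconnected_closed_iff]
  rintro A B hA hB hKAB ⟨a, haK, haA⟩ ⟨b, hbK, hbB⟩
  by_contra hKAB_empty
  have hdisj : Disjoint (closure (upsilonSet X)ᶜ ∩ A) (closure (upsilonSet X)ᶜ ∩ B) :=
    disjoint_left.2 fun p ⟨hpK, hpA⟩ ⟨_, hpB⟩ => hKAB_empty ⟨p, hpK, hpA, hpB⟩
  obtain ⟨H, hH0, hH1, -⟩ := exists_continuous_zero_one_of_isClosed
    (isClosed_closure.inter hA) (isClosed_closure.inter hB) hdisj
  exact hX <| exists_twoValuedMod_of_continuous_zero_one H.continuous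
    (fun p hp => (hKAB hp).imp (fun hpA => hH0 ⟨hp, hpA⟩) (fun hpB => hH1 ⟨hp, hpB⟩))
    ⟨a, haK, hH0 ⟨haK, haA⟩⟩ ⟨b, hbK, hH1 ⟨hbK, hbB⟩⟩

theorem connectedMod_of_isPreconnected_closure_compl_upsilonSet [CompletelyRegularSpace X]
    (hK : IsPreconnected (closure (upsilonSet X)ᶜ)) : ConnectedMod X (pseudocompactIdeal X) := by
  rintro ⟨f, hfc, hf01, hf0, hf1, hfmid⟩
  obtain ⟨F, hFc, rfl, hF01⟩ := exists_stoneCech_extension_Icc hfc hf01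
  have hFK : ∀ p ∈ closure (upsilonSet X)ᶜ, F p = 0 ∨ F p = 1 := by
    have hsub : stoneCechUnit ⁻¹' (F ⁻¹' Ioo 0 1) ⊆
        ((F ∘ stoneCechUnit) ⁻¹' {0} ∪ (F ∘ stoneCechUnit) ⁻¹' {1})ᶜ :=
      fun x hx h => h.elim hx.1.ne' hx.2.ne
    have hmid := disjoint_closure_compl_upsilonSet_of_preimage_mem (isOpen_Ioo.preimage hFc)
      (mem_genIdeal_of_subset hsub hfmid)
    intro p hp
    have hp01 : F p ∉ Ioo (0 : ℝ) 1 := hmid.notMem_of_mem_right hp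
    rcases (hF01 p).1.eq_or_lt with h0 | h0
    · exact Or.inl h0.symm
    · exact Or.inr ((hF01 p).2.eq_of_not_lt fun h1 => hp01 ⟨h0, h1⟩)
  have hK0 : (closure (upsilonSet X)ᶜ ∩ F ⁻¹' Iic (1 / 2)).Nonempty := by
    refine not_disjoint_iff_nonempty_inter.1 fun hdisj => hf0 (mem_genIdeal_of_subset ?_
      (preimage_mem_pseudocompactIdeal_of_disjoint (isOpen_Iio.preimage hFc)
        (isClosed_Iic.preimage hFc) (preimage_mono Iio_subset_Iic_self) hdisj.symm))
    intro x (hx : F (stoneCechUnit x) = 0)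
    show F (stoneCechUnit x) < 1 / 2
    norm_num [hx]
  have hK1 : (closure (upsilonSet X)ᶜ ∩ F ⁻¹' Ici (1 / 2)).Nonempty := by
    refine not_disjoint_iff_nonempty_inter.1 fun hdisj => hf1 (mem_genIdeal_of_subset ?_
      (preimage_mem_pseudocompactIdeal_of_disjoint (isOpen_Ioi.preimage hFc)
        (isClosed_Ici.preimage hFc) (preimage_mono Ioi_subset_Ici_self) hdisj.symm))
    intro x (hx : F (stoneCechUnit x) = 1)
    show 1 / 2 < F (stoneCechUnit x)
    norm_num [hx]
  obtain ⟨p, hpK, hp0, hp1⟩ := isPreconnected_closed_iff.1 hK _ _ (isClosed_Iic.preimage hFc)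
    (isClosed_Ici.preimage hFc) (fun p _ => le_total (F p) (1 / 2)) hK0 hK1
  have hp : F p = 1 / 2 := le_antisymm hp0 hp1
  rcases hFK p hpK with h | h <;> norm_num [h] at hp

end StoneCech

/-- A Tychonoff space `X` is connected modulo pseudocompactness (i.e., modulo the ideal
`𝓤_X` generated by the open subsets with pseudocompact closure) iff `cl_{βX}(βX \ υX)`
is preconnected. -/
theorem connectedMod_pseudocompact_iff {X : Type*} [TopologicalSpace X] [T35Space X] :
    ConnectedMod X (GenIdeal {U : Set X | IsOpen U ∧ IsPseudocompactSet (closure U)}) ↔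
      IsPreconnected (closure ((upsilonSet X)ᶜ)) :=
  ⟨isPreconnected_closure_compl_upsilonSet_of_connectedMod,
    connectedMod_of_isPreconnected_closure_compl_upsilonSet⟩
end

section
/- Let X be a normal Tychonoff space such that X = X₁ ∪ ⋯ ∪ Xₙ, where each Xᵢ is a closed realcompact subspace of X. Then X is realcompact. -/
open Set Topology

/-- A topological space `Y` is realcompact if it admits a closed embedding into a
product `ℝ^ι` for some index set `ι`. -/
def IsRealcompact (Y : Type u) [TopologicalSpace Y] : Prop :=
  ∃ (ι : Type u) (f : Y → ι → ℝ), IsClosedEmbedding f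

noncomputable section

variable {X : Type u} [TopologicalSpace X]

/-- The evaluation map `X → ℝ^{C(X,ℝ)}`. -/
def evalMap (X : Type u) [TopologicalSpace X] : X → C(X, ℝ) → ℝ := fun x f => f x

lemma continuous_evalMap : Continuous (evalMap X) :=
  continuous_pi fun f => f.continuous

lemma isClosed_image_evalMap [NormalSpace X] (s : Set X) (hs : IsClosed s)
    (hrc : IsRealcompact ↥s) : IsClosed (evalMap X '' s) := by
  obtain ⟨κ, g, hg⟩ := hrc
  -- extend each coordinate of `g` to all of `X` by Tietze
  have hG : ∀ k : κ, ∃ G : C(X, ℝ), ∀ y : s, G y = g y k := by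
    intro k
    obtain ⟨G, hG⟩ := ContinuousMap.exists_restrict_eq (Y := ℝ) hs
      ⟨fun y : s => g y k, ((continuous_apply k).comp hg.continuous)⟩
    exact ⟨G, fun y => by
      have := congrFun (congrArg ContinuousMap.toFun hG) y
      simpa [ContinuousMap.restrict_apply] using this⟩
  choose G hGspec using hG
  set Φ : (C(X, ℝ) → ℝ) → κ → ℝ := fun q k => q (G k) with hΦ
  have hΦc : Continuous Φ := continuous_pi fun k => continuous_apply (G k)
  have hΦe : ∀ (y : s), Φ (evalMap X y) = g y := by
    intro y; funext k; simp [Φ, evalMap, hGspec k y]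
  rw [← closure_subset_iff_isClosed]
  intro p hp
  -- first: Φ p lies in the (closed) range of g
  have h1 : Φ p ∈ range g := by
    have himg : Φ '' (evalMap X '' s) ⊆ range g := by
      rintro _ ⟨_, ⟨x, hx, rfl⟩, rfl⟩
      exact ⟨⟨x, hx⟩, (hΦe ⟨x, hx⟩).symm⟩
    have : Φ p ∈ closure (Φ '' (evalMap X '' s)) :=
      (image_closure_subset_closure_image hΦc) ⟨p, hp, rfl⟩
    have h2 : Φ p ∈ closure (range g) := closure_mono himg this
    rwa [hg.isClosed_range.closure_eq] at h2
  obtain ⟨y₀, hy₀⟩ := h1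
  refine ⟨y₀, y₀.2, ?_⟩
  funext f
  by_contra hne
  have hne' : f (y₀ : X) ≠ p f := fun h => hne (by simp [evalMap, h])
  set ε : ℝ := |p f - f (y₀ : X)| with hε
  have hεpos : 0 < ε := abs_pos.mpr (sub_ne_zero.mpr fun h => hne' h.symm)
  set C : Set s := {y : s | ε / 2 ≤ |f (y : X) - f (y₀ : X)|} with hC
  have hCclosed : IsClosed C := by
    have : Continuous fun y : s => |f (y : X) - f (y₀ : X)| := by
      exact ((f.continuous.comp continuous_subtype_val).sub continuous_const).abs
    exact isClosed_le continuous_const this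
  have hy₀C : y₀ ∉ C := by simp [hC]; linarith
  have hgC : IsClosed (g '' C) := hg.isClosedMap C hCclosed
  have hgy₀ : Φ p ∉ g '' C := by
    rw [← hy₀]
    rintro ⟨y, hy, hgy⟩
    exact hy₀C (hg.injective hgy ▸ hy)
  -- open neighbourhood of p
  set V : Set (C(X, ℝ) → ℝ) :=
    Φ ⁻¹' (g '' C)ᶜ ∩ {q | |q f - p f| < ε / 2} with hV
  have hVopen : IsOpen V := by
    refine (hgC.isOpen_compl.preimage hΦc).inter ?_
    exact isOpen_lt (((continuous_apply f).sub continuous_const).abs) continuous_const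
  have hpV : p ∈ V := by
    constructor
    · exact hgy₀
    · simpa using half_pos hεpos
  obtain ⟨q, hqV, hq⟩ := mem_closure_iff.mp hp V hVopen hpV
  obtain ⟨x, hx, rfl⟩ := hq
  have h2 : (⟨x, hx⟩ : s) ∉ C := by
    intro hmem
    exact hqV.1 ⟨⟨x, hx⟩, hmem, (hΦe ⟨x, hx⟩).symm⟩
  have h3 : |f x - f (y₀ : X)| < ε / 2 := lt_of_not_ge h2
  have h4 : |evalMap X x f - p f| < ε / 2 := hqV.2
  have : ε < ε := by
    calc ε = |p f - f (y₀ : X)| := hε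
    _ ≤ |p f - f x| + |f x - f (y₀ : X)| := abs_sub_le _ _ _
    _ < ε / 2 + ε / 2 := by
        have : |p f - f x| < ε / 2 := by
          rw [abs_sub_comm]; simpa [evalMap] using h4
        linarith
    _ = ε := by ring
  exact absurd this (lt_irrefl ε)

open unitInterval in
lemma isEmbedding_evalMap [T35Space X] : IsEmbedding (evalMap X) := by
  constructor
  · rw [isInducing_iff_nhds]
    intro x
    refine le_antisymm (continuous_evalMap.continuousAt.le_comap) ?_
    refine (nhds_basis_opens x).ge_iff.mpr ?_
    rintro U ⟨hxU, hU⟩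
    obtain ⟨f, cf, hfx, hf1⟩ :=
      CompletelyRegularSpace.completely_regular x Uᶜ hU.isClosed_compl (by simpa)
    set F : C(X, ℝ) := ⟨fun y => (f y : ℝ), continuous_subtype_val.comp cf⟩ with hF
    refine Filter.mem_comap.mpr ⟨{q | q F < 1}, ?_, ?_⟩
    · refine (isOpen_lt (continuous_apply F) continuous_const).mem_nhds ?_
      show (evalMap X x) F < 1
      simp [evalMap, hF, hfx]
    · intro y hy
      by_contra hyU
      have h1 : f y = 1 := hf1 hyU
      have h2 : ((f y : I) : ℝ) < 1 := hy
      rw [h1] at h2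
      simp at h2
  · intro x y hxy
    by_contra hne
    obtain ⟨f, hfc, hf⟩ := separatesPoints_continuous_of_t35Space hne
    exact hf (congrFun hxy ⟨f, hfc⟩)

end


/-- If a normal Tychonoff space `X` is a finite union of closed realcompact subspaces,
then `X` is realcompact. -/
theorem isRealcompact_of_finite_union_closed {X : Type u} [TopologicalSpace X]
    [NormalSpace X] [T35Space X]
    (n : ℕ) (hn : 0 < n) (Xs : Fin n → Set X)
    (hcl : ∀ i, IsClosed (Xs i))
    (hrc : ∀ i, IsRealcompact ↥(Xs i))
    (hcover : ⋃ i, Xs i = Set.univ) :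
    IsRealcompact X := by
  refine ⟨C(X, ℝ), evalMap X, isEmbedding_evalMap, ?_⟩
  have : range (evalMap X) = ⋃ i, evalMap X '' Xs i := by
    rw [← image_iUnion, hcover, image_univ]
  rw [this]
  exact isClosed_iUnion_of_finite fun i => isClosed_image_evalMap (Xs i) (hcl i) (hrc i)
end

section
/- Let X be a normal Tychonoff space, let βX be its Stone–Čech compactification (with X identified with its image), and let υX = ⋂{C : C is a cozero-set of βX containing X}. Let 𝓡_X be the ideal in X generated by the subsets of X whose closures are realcompact. Then X is connected modulo 𝓡_X if and only if cl_{βX}(υX \ X) is preconnected (i.e., it cannot be written as the union of two nonempty separated subsets). -/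
/-!
A set `S ⊆ X` lies in `𝓡_X` exactly when its closure in `βX` misses `υX \ X`. For closed `A`
with this property, `stoneCechUnit` embeds `A` as a closed subset of `υX`, and `υX` is
realcompact. Conversely, if `A` is closed and realcompact, every real function on `A` extends
to `υX` (Tietze, then the extension property of `υX`), and this forces the closure of `A` in
`υX` to be `A` itself.

Once the ideal is described this way, the theorem is about `βX` alone. Extending a two-valued
function to `βX` splits `cl_{βX}(υX \ X)` into two closed pieces. Conversely, an Urysohn
function on `βX` for thickenings of such a splitting is two-valued on `X`.
-/

open Set Topology

universe u

section Realcompact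

variable {A : Type u} [TopologicalSpace A]

theorem IsRealcompact.of_isClosedEmbedding {Z : Type u} [TopologicalSpace Z]
    (hZ : IsRealcompact Z) {f : A → Z} (hf : IsClosedEmbedding f) : IsRealcompact A := by
  obtain ⟨ι, e, he⟩ := hZ
  exact ⟨ι, e ∘ f, he.comp hf⟩

/-- If every real function on `A` extends along `j`, then so does a closed embedding
`e : A → ℝ^ι`; the extension `E` maps `closure (j '' B)` into the closed set `e '' B`,
and a closed neighbourhood of `p` avoiding `j a` pins `p` down as `j a`. -/
theorem IsRealcompact.mem_range_of_forall_extend {Z : Type*} [TopologicalSpace Z] [T3Space Z]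
    (hA : IsRealcompact A) {j : A → Z} (hj : Continuous j)
    (hext : ∀ v : A → ℝ, Continuous v → ∃ V : Z → ℝ, Continuous V ∧ V ∘ j = v)
    {p : Z} (hp : p ∈ closure (range j)) : p ∈ range j := by
  obtain ⟨ι, e, he⟩ := hA
  choose V hV hVj using fun i => hext (fun a => e a i) ((continuous_apply i).comp he.continuous)
  set E : Z → ι → ℝ := fun z i => V i z
  have hEj : E ∘ j = e := funext fun a => funext fun i => congrFun (hVj i) a
  have hE_mem : ∀ B : Set A, IsClosed B → p ∈ closure (j '' B) → ∃ b ∈ B, e b = E p := by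
    intro B hB hpB
    have hEp : E p ∈ closure (e '' B) := by
      rw [← hEj, image_comp]
      exact image_closure_subset_closure_image (continuous_pi hV) ⟨p, hpB, rfl⟩
    rwa [(he.isClosedMap B hB).closure_eq] at hEp
  obtain ⟨a, -, ha⟩ := hE_mem univ isClosed_univ (by rwa [image_univ])
  refine ⟨a, by_contra fun hne => ?_⟩
  obtain ⟨C, hC, hCc, hCa⟩ :=
    exists_mem_nhds_isClosed_subset (isOpen_compl_singleton.mem_nhds (Ne.symm hne))
  have hpC : p ∈ closure (j '' (j ⁻¹' C)) := by
    rw [image_preimage_eq_inter_range, mem_closure_iff_nhds]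
    intro t ht
    simpa only [inter_assoc] using mem_closure_iff_nhds.1 hp (t ∩ C) (Filter.inter_mem ht hC)
  obtain ⟨b, hb, hba⟩ := hE_mem (j ⁻¹' C) (hCc.preimage hj) hpC
  exact hCa (he.injective (hba.trans ha.symm) ▸ hb) rfl

end Realcompact

theorem isClosedEmbedding_evalContinuousMap {K : Type*} [TopologicalSpace K] [CompactSpace K]
    [T2Space K] : IsClosedEmbedding fun (p : K) (f : C(K, ℝ)) => f p := by
  refine (continuous_pi fun f => f.continuous).isClosedEmbedding fun p q hpq => ?_
  by_contra hne
  obtain ⟨f, hf, hfpq⟩ := separatesPoints_continuous_of_t35Space hne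
  exact hfpq (congrFun hpq ⟨f, hf⟩)

section StoneCech

variable {X : Type u} [TopologicalSpace X]

theorem mem_upsilonSet_iff {p : StoneCech X} :
    p ∈ upsilonSet X ↔ ∀ g : StoneCech X → ℝ, Continuous g →
      (∀ x, g (stoneCechUnit x) ≠ 0) → g p ≠ 0 := by
  constructor
  · intro hp g hg hX
    exact hp _ ⟨⟨g, hg, rfl⟩, range_subset_iff.2 hX⟩
  · rintro h C ⟨⟨g, hg, rfl⟩, hX⟩
    exact h g hg fun x => hX ⟨x, rfl⟩

theorem range_stoneCechUnit_subset_upsilonSet :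
    range (stoneCechUnit : X → StoneCech X) ⊆ upsilonSet X :=
  fun _ hp _ hC => hC.2 hp

def toUpsilonSet : X → upsilonSet X :=
  codRestrict stoneCechUnit _ fun x => range_stoneCechUnit_subset_upsilonSet ⟨x, rfl⟩

/-- Squeeze `f` into `(-1, 1)` and extend to `βX`; on `υX` the extension stays inside
`(-1, 1)`, since `1 - |G|` is a continuous function on `βX` without zeros on `X`. -/
theorem exists_continuous_extend_upsilonSet {f : X → ℝ} (hf : Continuous f) :
    ∃ F : upsilonSet X → ℝ, Continuous F ∧ F ∘ toUpsilonSet = f := by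
  let σ := (orderIsoIooNegOneOne ℝ).toHomeomorph
  let t : X → Icc (-1 : ℝ) 1 := fun x => ⟨σ (f x), Ioo_subset_Icc_self (σ (f x)).2⟩
  have ht : Continuous t := ((continuous_subtype_val.comp σ.continuous).comp hf).subtype_mk _
  let G : StoneCech X → ℝ := fun p => (stoneCechExtend ht p).1
  have hG : Continuous G := continuous_subtype_val.comp (continuous_stoneCechExtend ht)
  have hGX : ∀ x, G (stoneCechUnit x) = σ (f x) := fun x => by
    simp only [G, stoneCechExtend_stoneCechUnit, t]
  have hGυ : ∀ p : upsilonSet X, G p ∈ Ioo (-1 : ℝ) 1 := by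
    rintro ⟨p, hp⟩
    have hne : 1 - |G p| ≠ 0 := mem_upsilonSet_iff.1 hp (fun q => 1 - |G q|) (by fun_prop)
      fun x => by rw [hGX]; exact sub_ne_zero.2 (abs_lt.2 (σ (f x)).2).ne'
    exact abs_lt.1 ((abs_le.2 (stoneCechExtend ht p).2).lt_of_ne (sub_ne_zero.1 hne).symm)
  refine ⟨fun p => σ.symm ⟨G p, hGυ p⟩,
    σ.symm.continuous.comp ((hG.comp continuous_subtype_val).subtype_mk _), funext fun x => ?_⟩
  simp only [Function.comp_apply, toUpsilonSet, val_codRestrict_apply, hGX, Subtype.coe_eta,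
    Homeomorph.symm_apply_apply]

/-- `p ↦ ((f p)_f, (1 / g p)_g)`, with `f` ranging over `C(βX, ℝ)` and `g` over the functions
in `C(βX, ℝ)` without zeros on `X`, is a closed embedding of `υX`. -/
theorem isRealcompact_upsilonSet : IsRealcompact (upsilonSet X) := by
  let 𝒢 := {g : C(StoneCech X, ℝ) // ∀ x, g (stoneCechUnit x) ≠ 0}
  have hυ : ∀ (g : 𝒢) (p : upsilonSet X), g.1 p ≠ 0 := fun g p =>
    mem_upsilonSet_iff.1 p.2 g.1 g.1.continuous g.2
  let Φ : StoneCech X → C(StoneCech X, ℝ) → ℝ := fun p f => f p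
  have hΦ : IsClosedEmbedding Φ := isClosedEmbedding_evalContinuousMap
  let Ψ : upsilonSet X → C(StoneCech X, ℝ) ⊕ 𝒢 → ℝ := fun p =>
    Sum.elim (fun f => f p) (fun g => (g.1 p)⁻¹)
  let π : (C(StoneCech X, ℝ) ⊕ 𝒢 → ℝ) → C(StoneCech X, ℝ) → ℝ := fun q f => q (Sum.inl f)
  have hπ : Continuous π := continuous_pi fun f => continuous_apply _
  have hΨ : Continuous Ψ := by
    refine continuous_pi fun o => ?_
    rcases o with f | g
    · exact f.continuous.comp continuous_subtype_val
    · exact (g.1.continuous.comp continuous_subtype_val).inv₀ (hυ g)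
  have hΨemb : IsEmbedding Ψ := by
    have hπΨ : IsEmbedding (π ∘ Ψ) := hΦ.isEmbedding.comp IsEmbedding.subtypeVal
    exact ⟨.of_comp hΨ hπ hπΨ.isInducing, hπΨ.injective.of_comp⟩
  have hrange : range Ψ =
      π ⁻¹' range Φ ∩ ⋂ g : 𝒢, {q | q (Sum.inr g) * q (Sum.inl g.1) = 1} := by
    ext q
    constructor
    · rintro ⟨p, rfl⟩
      exact ⟨⟨p.1, rfl⟩, mem_iInter.2 fun g => inv_mul_cancel₀ (hυ g p)⟩
    · rintro ⟨⟨p, hp⟩, hq⟩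
      have hq' : ∀ g : 𝒢, q (Sum.inr g) * g.1 p = 1 := fun g => by
        have hpg : g.1 p = q (Sum.inl g.1) := congrFun hp g.1
        exact hpg ▸ mem_iInter.1 hq g
      have hpυ : p ∈ upsilonSet X := mem_upsilonSet_iff.2 fun g hg hX =>
        right_ne_zero_of_mul_eq_one (hq' ⟨⟨g, hg⟩, hX⟩)
      refine ⟨⟨p, hpυ⟩, funext fun o => ?_⟩
      rcases o with f | g
      · exact congrFun hp f
      · exact (eq_inv_of_mul_eq_one_left (hq' g)).symm
  refine ⟨_, Ψ, hΨemb, ?_⟩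
  rw [hrange]
  exact (hΦ.isClosed_range.preimage hπ).inter
    (isClosed_iInter fun g => isClosed_eq (by fun_prop) continuous_const)

end StoneCech

section ClosedSubset

variable {X : Type u} [TopologicalSpace X] {A : Set X}

theorem isRealcompact_of_disjoint_closure_image [T35Space X] (hA : IsClosed A)
    (hd : Disjoint (closure (stoneCechUnit '' A)) (upsilonSet X \ range stoneCechUnit)) :
    IsRealcompact A := by
  let j : A → upsilonSet X := toUpsilonSet ∘ Subtype.val
  have hj : IsEmbedding j :=
    (isEmbedding_stoneCechUnit.comp IsEmbedding.subtypeVal).codRestrict _ _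
  have hrange : range j = Subtype.val ⁻¹' closure (stoneCechUnit '' A) := by
    ext q
    constructor
    · rintro ⟨a, rfl⟩
      exact subset_closure ⟨a, a.2, rfl⟩
    · intro hqA
      obtain ⟨x, hx⟩ : q.1 ∈ range stoneCechUnit :=
        by_contra fun hqX => disjoint_left.1 hd hqA ⟨q.2, hqX⟩
      have hxA : x ∈ closure A := by
        rw [isEmbedding_stoneCechUnit.closure_eq_preimage_closure_image, mem_preimage, hx]
        exact hqA
      exact ⟨⟨x, hA.closure_eq ▸ hxA⟩, Subtype.ext hx⟩
  refine isRealcompact_upsilonSet.of_isClosedEmbedding ⟨hj, ?_⟩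
  rw [hrange]
  exact isClosed_closure.preimage continuous_subtype_val

theorem disjoint_closure_image_of_isRealcompact [NormalSpace X] (hA : IsClosed A)
    (hrc : IsRealcompact A) :
    Disjoint (closure (stoneCechUnit '' A)) (upsilonSet X \ range stoneCechUnit) := by
  rw [disjoint_left]
  rintro p hpA ⟨hp, hpX⟩
  let j : A → upsilonSet X := toUpsilonSet ∘ Subtype.val
  have hj : Continuous j := (continuous_stoneCechUnit.comp continuous_subtype_val).codRestrict _
  have hext : ∀ v : A → ℝ, Continuous v →
      ∃ V : upsilonSet X → ℝ, Continuous V ∧ V ∘ j = v := by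
    intro v hv
    obtain ⟨g, hg⟩ := ContinuousMap.exists_restrict_eq hA ⟨v, hv⟩
    obtain ⟨V, hV, hVg⟩ := exists_continuous_extend_upsilonSet g.continuous
    refine ⟨V, hV, ?_⟩
    rw [← Function.comp_assoc, hVg]
    exact congrArg DFunLike.coe hg
  have hpj : (⟨p, hp⟩ : upsilonSet X) ∈ closure (range j) := by
    rwa [IsInducing.subtypeVal.closure_eq_preimage_closure_image, ← range_comp,
      show Subtype.val ∘ j = stoneCechUnit ∘ Subtype.val from rfl, range_comp, Subtype.range_coe]
  obtain ⟨a, ha⟩ := hrc.mem_range_of_forall_extend hj hext hpj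
  exact hpX ⟨a, congrArg Subtype.val ha⟩

end ClosedSubset

theorem mem_genIdeal_realcompact_iff {X : Type u} [TopologicalSpace X] [NormalSpace X]
    [T35Space X] {S : Set X} :
    S ∈ GenIdeal {R : Set X | IsRealcompact (closure R)} ↔
      Disjoint (closure (stoneCechUnit '' S)) (upsilonSet X \ range stoneCechUnit) := by
  constructor
  · rintro ⟨𝓑, h𝓑, hfin, hS⟩
    have hcover : closure (stoneCechUnit '' S) ⊆ ⋃ R ∈ 𝓑, closure (stoneCechUnit '' closure R) := by
      refine closure_minimal ?_ (hfin.isClosed_biUnion fun _ _ => isClosed_closure)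
      rintro _ ⟨x, hx, rfl⟩
      obtain ⟨R, hR, hxR⟩ := hS hx
      exact mem_biUnion hR (subset_closure ⟨x, subset_closure hxR, rfl⟩)
    exact disjoint_of_subset_left hcover <| disjoint_iUnion₂_left.2 fun R hR =>
      disjoint_closure_image_of_isRealcompact isClosed_closure (h𝓑 hR)
  · intro hd
    refine ⟨{closure S}, singleton_subset_iff.2 ?_, finite_singleton _,
      (sUnion_singleton _).symm ▸ subset_closure⟩
    show IsRealcompact (closure (closure S))
    rw [closure_closure]
    refine isRealcompact_of_disjoint_closure_image isClosed_closure ?_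
    rwa [closure_image_closure continuous_stoneCechUnit]

section ClosureDisjointIdeal

variable {X : Type u} [TopologicalSpace X] {D : Set (StoneCech X)}

def closureDisjointIdeal (D : Set (StoneCech X)) : Set (Set X) :=
  {S | Disjoint (closure (stoneCechUnit '' S)) D}

theorem subset_closure_image_stoneCechUnit {O : Set (StoneCech X)} (hO : IsOpen O) {S : Set X}
    (hS : stoneCechUnit ⁻¹' O ⊆ S) : O ⊆ closure (stoneCechUnit '' S) := by
  refine (denseRange_stoneCechUnit.open_subset_closure_inter hO).trans (closure_mono ?_)
  rw [← image_preimage_eq_inter_range]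
  exact image_mono hS

theorem notMem_closureDisjointIdeal_of_isOpen {O : Set (StoneCech X)} (hO : IsOpen O)
    (hOD : (O ∩ closure D).Nonempty) {S : Set X} (hS : stoneCechUnit ⁻¹' O ⊆ S) :
    S ∉ closureDisjointIdeal D := by
  intro hSD
  obtain ⟨p, hpO, hpD⟩ := hOD
  obtain ⟨q, hqO, hqD⟩ := mem_closure_iff.1 hpD O hO hpO
  exact disjoint_left.1 hSD (subset_closure_image_stoneCechUnit hO hS hqO) hqD

theorem disjoint_closure_image_preimage {Y : Type*} [TopologicalSpace Y] [CompactSpace Y]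
    [T2Space Y] {f : X → Y} (hf : Continuous f) {s t : Set Y} (hs : IsClosed s)
    (ht : IsClosed t) (hst : Disjoint s t) :
    Disjoint (closure (stoneCechUnit '' (f ⁻¹' s))) (closure (stoneCechUnit '' (f ⁻¹' t))) := by
  have hsub : ∀ s : Set Y, IsClosed s →
      closure (stoneCechUnit '' (f ⁻¹' s)) ⊆ stoneCechExtend hf ⁻¹' s := fun s hs =>
    closure_minimal (by rintro _ ⟨x, hx, rfl⟩; simpa [stoneCechExtend_stoneCechUnit] using hx)
      (hs.preimage (continuous_stoneCechExtend hf))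
  exact (hst.preimage _).mono (hsub s hs) (hsub t ht)

theorem connectedMod_of_isPreconnected_closure (hD : IsPreconnected (closure D)) :
    ConnectedMod X (closureDisjointIdeal D) := by
  rintro ⟨f, hf, hf01, h0, h1, hmid⟩
  set C₀ := closure (stoneCechUnit '' (f ⁻¹' {0}))
  set C₁ := closure (stoneCechUnit '' (f ⁻¹' {1}))
  have hC : Disjoint C₀ C₁ := by
    have hpre : ∀ c : Icc (0 : ℝ) 1,
        (fun x => (⟨f x, hf01 x⟩ : Icc (0 : ℝ) 1)) ⁻¹' {c} = f ⁻¹' {c.1} := fun c => by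
      ext x
      simp [Subtype.ext_iff]
    have := disjoint_closure_image_preimage (hf.subtype_mk hf01)
      (isClosed_singleton (x := (⟨0, by norm_num⟩ : Icc (0 : ℝ) 1)))
      (isClosed_singleton (x := ⟨1, by norm_num⟩))
      (disjoint_singleton.2 fun h => zero_ne_one (congrArg Subtype.val h))
    rwa [hpre, hpre] at this
  have hcover : closure D ⊆ C₀ ∪ C₁ := by
    refine closure_minimal (fun p hp => ?_) (isClosed_closure.union isClosed_closure)
    have hp' := denseRange_stoneCechUnit (α := X) p
    rw [← image_univ, ← union_compl_self (f ⁻¹' {0} ∪ f ⁻¹' {1}), image_union, image_union,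
      closure_union, closure_union] at hp'
    exact hp'.resolve_right fun hpM => disjoint_left.1 hmid hpM hp
  rcases isPreconnected_iff_subset_of_disjoint_closed.1 hD C₀ C₁ isClosed_closure
    isClosed_closure hcover (by rw [hC.inter_eq, inter_empty]) with h | h
  · exact h1 (hC.symm.mono_right (subset_closure.trans h))
  · exact h0 (hC.mono_right (subset_closure.trans h))

theorem isPreconnected_closure_of_connectedMod (hX : ConnectedMod X (closureDisjointIdeal D)) :
    IsPreconnected (closure D) := by
  rw [isPreconnected_closed_iff]
  intro s t hs ht hst hDs hDt
  by_contra hempty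
  have hA : IsClosed (closure D ∩ s) := isClosed_closure.inter hs
  have hB : IsClosed (closure D ∩ t) := isClosed_closure.inter ht
  have hAB : Disjoint (closure D ∩ s) (closure D ∩ t) := by
    rw [disjoint_iff_inter_eq_empty, inter_inter_inter_comm, inter_self]
    exact not_nonempty_iff_eq_empty.1 hempty
  obtain ⟨U, hU, hAU, hUB⟩ := normal_exists_closure_subset hA hB.isOpen_compl
    (subset_compl_iff_disjoint_right.2 hAB)
  obtain ⟨V, hV, hBV, hVU⟩ := normal_exists_closure_subset hB isClosed_closure.isOpen_compl
    (subset_compl_comm.1 hUB)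
  obtain ⟨g, hg0, hg1, hg01⟩ := exists_continuous_zero_one_of_isClosed isClosed_closure
    isClosed_closure (subset_compl_iff_disjoint_left.1 hVU)
  refine hX ⟨g ∘ stoneCechUnit, g.continuous.comp continuous_stoneCechUnit, fun x => hg01 _,
    notMem_closureDisjointIdeal_of_isOpen hU (hDs.mono ?_) fun x hx => hg0 (subset_closure hx),
    notMem_closureDisjointIdeal_of_isOpen hV (hDt.mono ?_) fun x hx => hg1 (subset_closure hx),
    ?_⟩
  · exact fun p hp => ⟨hAU hp, hp.1⟩
  · exact fun p hp => ⟨hBV hp, hp.1⟩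
  have hDUV : D ⊆ U ∪ V := fun p hp => (hst (subset_closure hp)).imp
    (fun h => hAU ⟨subset_closure hp, h⟩) (fun h => hBV ⟨subset_closure hp, h⟩)
  refine disjoint_of_subset_left (closure_minimal ?_ (hU.union hV).isClosed_compl)
    (disjoint_compl_left_iff_subset.2 hDUV)
  rintro _ ⟨x, hx, rfl⟩ (h | h)
  exacts [hx (.inl (hg0 (subset_closure h))), hx (.inr (hg1 (subset_closure h)))]

end ClosureDisjointIdeal

theorem connectedMod_iff_isPreconnected_closure {X : Type u} [TopologicalSpace X]
    (D : Set (StoneCech X)) :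
    ConnectedMod X (closureDisjointIdeal D) ↔ IsPreconnected (closure D) :=
  ⟨isPreconnected_closure_of_connectedMod, connectedMod_of_isPreconnected_closure⟩

/-- A normal Tychonoff space `X` is connected modulo realcompactness (modulo the ideal
`𝓡_X` generated by the subsets of `X` with realcompact closure) iff `cl_{βX}(υX \ X)`
is preconnected. -/
theorem connectedMod_realcompact_iff {X : Type u} [TopologicalSpace X]
    [NormalSpace X] [T35Space X] :
    ConnectedMod X (GenIdeal {R : Set X | IsRealcompact ↥(closure R)}) ↔
      IsPreconnected
        (closure (upsilonSet X \ Set.range (stoneCechUnit : X → StoneCech X))) := by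
  have hideal : GenIdeal {R : Set X | IsRealcompact ↥(closure R)} =
      closureDisjointIdeal (upsilonSet X \ range stoneCechUnit) :=
    Set.ext fun _ => mem_genIdeal_realcompact_iff
  rw [hideal]
  exact connectedMod_iff_isPreconnected_closure _
end

section
/- Let X be a normal Tychonoff space such that X = X₁ ∪ ⋯ ∪ Xₙ, where each Xᵢ is a closed subspace of X which is connected modulo realcompactness (i.e., connected modulo the ideal 𝓡_{Xᵢ} in Xᵢ generated by the subsets of Xᵢ with realcompact closure in Xᵢ). If X₁ ∩ ⋯ ∩ Xₙ is not realcompact, then X is connected modulo realcompactness (connected modulo 𝓡_X). -/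
open Set Topology

/-!
Call a set thin if it lies in the ideal. On each piece `Xᵢ` the middle part of a two-valued
`f : X → [0,1]` is thin, so one of the two fibres of `f` on `Xᵢ` is thin. If the `0`-fibre were
thin on every piece, `f⁻¹(0)` would be thin; hence on some piece the `1`-fibre is thin, and
likewise on some piece the `0`-fibre is thin. These two thin fibres and the middle cover
`⋂ᵢ Xᵢ`, which is therefore thin. For the realcompactness ideal a closed thin set `K` is
realcompact: it is covered by finitely many closed realcompact sets, on each of which the
evaluation map `K → ℝ^C(K, ℝ)` is a closed embedding (extend the coordinates of an embedding
by Tietze), so the evaluation map is a closed embedding of `K`.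
-/

universe u

namespace IsSetIdeal

variable {X : Type*} {H : Set (Set X)}

theorem mem_of_subset (hH : IsSetIdeal H) {A B : Set X} (hAB : A ⊆ B) (hB : B ∈ H) : A ∈ H :=
  hH.2.1 A B hAB hB

theorem union_mem (hH : IsSetIdeal H) {A B : Set X} (hA : A ∈ H) (hB : B ∈ H) : A ∪ B ∈ H :=
  hH.2.2 A B hA hB

theorem empty_mem_s19 (hH : IsSetIdeal H) : ∅ ∈ H :=
  let ⟨_, hA⟩ := hH.1
  hH.mem_of_subset (empty_subset _) hA

theorem sUnion_mem (hH : IsSetIdeal H) {𝓑 : Set (Set X)} (hfin : 𝓑.Finite) (h𝓑 : 𝓑 ⊆ H) :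
    ⋃₀ 𝓑 ∈ H := by
  induction 𝓑, hfin using Set.Finite.induction_on with
  | empty => simpa using hH.empty_mem_s19
  | insert _ _ ih =>
    rw [sUnion_insert]
    exact hH.union_mem (h𝓑 (mem_insert _ _)) (ih ((subset_insert _ _).trans h𝓑))

theorem iUnion_mem (hH : IsSetIdeal H) {ι : Type*} [Finite ι] {S : ι → Set X}
    (hS : ∀ i, S i ∈ H) : ⋃ i, S i ∈ H := by
  rw [← sUnion_range]
  exact hH.sUnion_mem (finite_range S) (range_subset_iff.2 hS)

end IsSetIdeal

theorem isSetIdeal_genIdeal {X : Type*} (𝓐 : Set (Set X)) : IsSetIdeal (GenIdeal 𝓐) := by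
  refine ⟨⟨∅, ∅, empty_subset _, finite_empty, empty_subset _⟩, ?_, ?_⟩
  · rintro A B hAB ⟨𝓑, h𝓑, hfin, hB⟩
    exact ⟨𝓑, h𝓑, hfin, hAB.trans hB⟩
  · rintro A B ⟨𝓑, h𝓑, hfin, hA⟩ ⟨𝓑', h𝓑', hfin', hB⟩
    exact ⟨𝓑 ∪ 𝓑', union_subset h𝓑 h𝓑', hfin.union hfin',
      sUnion_union 𝓑 𝓑' ▸ union_subset_union hA hB⟩

theorem GenIdeal.mapsTo {X Y : Type*} {𝓐 : Set (Set X)} {𝓐' : Set (Set Y)}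
    {F : Set X → Set Y} (hF : MapsTo F 𝓐 𝓐') (hmono : Monotone F)
    (hsUnion : ∀ 𝓑 : Set (Set X), F (⋃₀ 𝓑) ⊆ ⋃₀ (F '' 𝓑)) :
    MapsTo F (GenIdeal 𝓐) (GenIdeal 𝓐') := by
  rintro S ⟨𝓑, h𝓑, hfin, hS⟩
  exact ⟨F '' 𝓑, hF.mono_left h𝓑 |>.image_subset, hfin.image F, (hmono hS).trans (hsUnion 𝓑)⟩

section Realcompact

variable {X Y Z : Type u} [TopologicalSpace X] [TopologicalSpace Y] [TopologicalSpace Z]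

theorem IsRealcompact.of_isClosedEmbedding_s19 {e : Y → Z} (he : IsClosedEmbedding e)
    (hZ : IsRealcompact Z) : IsRealcompact Y :=
  let ⟨ι, f, hf⟩ := hZ
  ⟨ι, f ∘ e, hf.comp he⟩

theorem IsRealcompact.of_range_subset {e₁ : Y → X} {e₂ : Z → X} (he₁ : IsClosedEmbedding e₁)
    (he₂ : IsClosedEmbedding e₂) (hsub : range e₁ ⊆ range e₂) (hZ : IsRealcompact Z) :
    IsRealcompact Y := by
  choose m hm using fun y => hsub (mem_range_self y)
  have hcomp : e₂ ∘ m = e₁ := funext hm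
  exact hZ.of_isClosedEmbedding_s19 (.of_comp he₂.isEmbedding (hcomp ▸ he₁))

theorem isRealcompact_closure_preimage_val {S : Set X} (hS : IsClosed S) {R : Set X}
    (hR : IsRealcompact (closure R)) :
    IsRealcompact (closure (Subtype.val ⁻¹' R : Set S)) := by
  refine hR.of_range_subset (e₁ := Subtype.val ∘ Subtype.val)
    (hS.isClosedEmbedding_subtypeVal.comp isClosed_closure.isClosedEmbedding_subtypeVal)
    isClosed_closure.isClosedEmbedding_subtypeVal ?_
  rw [range_comp, Subtype.range_coe, Subtype.range_coe]
  exact (image_closure_subset_closure_image continuous_subtype_val).trans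
    (closure_mono (image_preimage_subset _ _))

theorem isRealcompact_closure_image_val {S : Set X} (hS : IsClosed S) {R : Set S}
    (hR : IsRealcompact (closure R)) :
    IsRealcompact (closure (Subtype.val '' R : Set X)) := by
  refine hR.of_range_subset isClosed_closure.isClosedEmbedding_subtypeVal
    (hS.isClosedEmbedding_subtypeVal.comp isClosed_closure.isClosedEmbedding_subtypeVal) ?_
  rw [range_comp, Subtype.range_coe, Subtype.range_coe,
    hS.isClosedEmbedding_subtypeVal.closure_image_eq]

end Realcompact

theorem Topology.IsClosedEmbedding.of_comp_of_t2 {X Y Z : Type*} [TopologicalSpace X]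
    [TopologicalSpace Y] [TopologicalSpace Z] [T2Space Y] {f : X → Y} {g : Y → Z}
    (hf : Continuous f) (hg : Continuous g) (hgf : IsClosedEmbedding (g ∘ f)) :
    IsClosedEmbedding f :=
  .of_continuous_injective_isClosedMap hf hgf.injective.of_comp
    (isProperMap_of_comp_of_t2 hf hg hgf.isProperMap).isClosedMap

theorem IsClosedMap.of_iUnion_eq_univ {X Y : Type*} [TopologicalSpace X] [TopologicalSpace Y]
    {ι : Type*} [Finite ι] {A : ι → Set X} (hcover : ⋃ i, A i = univ) {g : X → Y}
    (hg : ∀ i, IsClosedMap (g ∘ Subtype.val : A i → Y)) : IsClosedMap g := by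
  intro C hC
  have hC_eq : g '' C = ⋃ i, (g ∘ Subtype.val) '' (Subtype.val ⁻¹' C : Set (A i)) := by
    simp only [image_comp, Subtype.image_preimage_coe, ← image_iUnion, ← iUnion_inter, hcover,
      univ_inter]
  rw [hC_eq]
  exact isClosed_iUnion_of_finite fun i => hg i _ (hC.preimage continuous_subtype_val)

theorem isClosedEmbedding_eval_restrict {Y : Type*} [TopologicalSpace Y] [NormalSpace Y]
    {A : Set Y} (hA : IsClosed A) (hrc : IsRealcompact A) :
    IsClosedEmbedding (fun (a : A) (φ : C(Y, ℝ)) => φ a) := by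
  obtain ⟨κ, f, hf⟩ := hrc
  choose F hF using fun k => ContinuousMap.exists_restrict_eq hA
    ⟨fun a => f a k, (continuous_apply k).comp hf.continuous⟩
  refine .of_comp_of_t2 (g := fun v k => v (F k))
    (continuous_pi fun φ => φ.continuous.comp continuous_subtype_val)
    (continuous_pi fun k => continuous_apply _) ?_
  convert hf using 1
  funext a k
  exact ContinuousMap.congr_fun (hF k) a

theorem IsRealcompact.of_iUnion_eq_univ {Y : Type u} [TopologicalSpace Y] [NormalSpace Y]
    [T35Space Y] {ι : Type*} [Finite ι] {A : ι → Set Y} (hA : ∀ i, IsClosed (A i))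
    (hcover : ⋃ i, A i = univ) (hrc : ∀ i, IsRealcompact (A i)) : IsRealcompact Y := by
  refine ⟨C(Y, ℝ), fun y φ => φ y, .of_continuous_injective_isClosedMap
    (continuous_pi fun φ => φ.continuous) ?_ (IsClosedMap.of_iUnion_eq_univ hcover fun i =>
      (isClosedEmbedding_eval_restrict (hA i) (hrc i)).isClosedMap)⟩
  intro x y hxy
  by_contra hne
  obtain ⟨f, hf, hfxy⟩ := separatesPoints_continuous_of_t35Space hne
  exact hfxy (congrFun hxy ⟨f, hf⟩)

def realcompactIdeal (X : Type u) [TopologicalSpace X] : Set (Set X) :=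
  GenIdeal {R : Set X | IsRealcompact (closure R)}

section RealcompactIdeal

variable {X : Type u} [TopologicalSpace X] {S : Set X}

theorem preimage_val_mem_realcompactIdeal (hS : IsClosed S) {W : Set X}
    (hW : W ∈ realcompactIdeal X) : (Subtype.val ⁻¹' W : Set S) ∈ realcompactIdeal S :=
  GenIdeal.mapsTo (F := preimage Subtype.val) (fun _ => isRealcompact_closure_preimage_val hS)
    (fun _ _ => preimage_mono)
    (fun 𝓑 => by rw [preimage_sUnion, sUnion_image]) hW

theorem image_val_mem_realcompactIdeal (hS : IsClosed S) {W : Set S}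
    (hW : W ∈ realcompactIdeal S) : (Subtype.val '' W : Set X) ∈ realcompactIdeal X :=
  GenIdeal.mapsTo (F := image Subtype.val) (fun _ => isRealcompact_closure_image_val hS)
    (fun _ _ => image_mono)
    (fun 𝓑 => by rw [sUnion_eq_biUnion, image_iUnion₂, sUnion_image]) hW

theorem IsClosed.isRealcompact_of_mem_realcompactIdeal [NormalSpace X] [T35Space X]
    (hS : IsClosed S) (hmem : S ∈ realcompactIdeal X) : IsRealcompact S := by
  obtain ⟨𝓑, h𝓑, hfin, hS𝓑⟩ := hmem
  have : NormalSpace S := hS.isClosedEmbedding_subtypeVal.normalSpace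
  have : Finite 𝓑 := hfin
  refine IsRealcompact.of_iUnion_eq_univ (A := fun R : 𝓑 => (Subtype.val ⁻¹' closure R.1 : Set S))
    (fun R => isClosed_closure.preimage continuous_subtype_val) ?_ fun R => ?_
  · refine eq_univ_of_forall fun x => ?_
    obtain ⟨R, hR, hxR⟩ := hS𝓑 x.2
    exact mem_iUnion.2 ⟨⟨R, hR⟩, subset_closure hxR⟩
  · refine (h𝓑 R.2).of_range_subset (e₁ := Subtype.val ∘ Subtype.val)
      (hS.isClosedEmbedding_subtypeVal.comp
        (isClosed_closure.preimage continuous_subtype_val).isClosedEmbedding_subtypeVal)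
      isClosed_closure.isClosedEmbedding_subtypeVal ?_
    rw [range_comp, Subtype.range_coe, Subtype.range_coe]
    exact image_preimage_subset _ _

end RealcompactIdeal

theorem ConnectedMod.preimage_zero_mem_or_preimage_one_mem {X : Type*} [TopologicalSpace X]
    {H : Set (Set X)} (hX : ConnectedMod X H) {f : X → ℝ} (hf : Continuous f)
    (hf01 : ∀ x, f x ∈ Icc (0 : ℝ) 1) (hmid : (f ⁻¹' {0} ∪ f ⁻¹' {1})ᶜ ∈ H) :
    f ⁻¹' {0} ∈ H ∨ f ⁻¹' {1} ∈ H := by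
  by_contra! h
  exact hX ⟨f, hf, hf01, h.1, h.2, hmid⟩

theorem ConnectedMod.of_iUnion {X : Type*} [TopologicalSpace X] {H : Set (Set X)}
    (hH : IsSetIdeal H) {ι : Type*} [Finite ι] {Xs : ι → Set X} {Hs : ∀ i, Set (Set (Xs i))}
    (hcover : ⋃ i, Xs i = univ) (hpre : ∀ i, ∀ W ∈ H, Subtype.val ⁻¹' W ∈ Hs i)
    (himg : ∀ i, ∀ W ∈ Hs i, Subtype.val '' W ∈ H) (hconn : ∀ i, ConnectedMod (Xs i) (Hs i))
    (hinter : ⋂ i, Xs i ∉ H) : ConnectedMod X H := by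
  rintro ⟨f, hf, hf01, h0, h1, hmid⟩
  have hglue : ∀ S : Set X, (∀ i, Subtype.val ⁻¹' S ∈ Hs i) → S ∈ H := fun S hS => by
    have hS_eq : S = ⋃ i, Subtype.val '' (Subtype.val ⁻¹' S : Set (Xs i)) := by
      simp only [Subtype.image_preimage_coe, ← iUnion_inter, hcover, univ_inter]
    exact hS_eq ▸ hH.iUnion_mem fun i => himg i _ (hS i)
  have hpiece : ∀ i, Subtype.val ⁻¹' (f ⁻¹' {0}) ∈ Hs i ∨ Subtype.val ⁻¹' (f ⁻¹' {1}) ∈ Hs i :=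
    fun i => (hconn i).preimage_zero_mem_or_preimage_one_mem (hf.comp continuous_subtype_val)
      (fun x => hf01 x) (hpre i _ hmid)
  obtain ⟨i, hi⟩ : ∃ i, Subtype.val ⁻¹' (f ⁻¹' {1}) ∈ Hs i := by
    by_contra! h
    exact h0 (hglue _ fun i => (hpiece i).resolve_right (h i))
  obtain ⟨j, hj⟩ : ∃ j, Subtype.val ⁻¹' (f ⁻¹' {0}) ∈ Hs j := by
    by_contra! h
    exact h1 (hglue _ fun j => (hpiece j).resolve_left (h j))
  refine hinter (hH.mem_of_subset ?_ <|
    hH.union_mem (hH.union_mem (himg j _ hj) (himg i _ hi)) hmid)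
  rw [Subtype.image_preimage_coe, Subtype.image_preimage_coe]
  intro x hx
  have hxi := mem_iInter.1 hx
  by_cases hx0 : f x = 0
  · exact Or.inl (Or.inl ⟨hxi j, hx0⟩)
  by_cases hx1 : f x = 1
  · exact Or.inl (Or.inr ⟨hxi i, hx1⟩)
  · exact Or.inr (by simp [hx0, hx1])

theorem connectedMod_realcompact_of_finite_union_general {X : Type u} [TopologicalSpace X]
    [NormalSpace X] [T35Space X]
    (n : ℕ) (Xs : Fin n → Set X)
    (hcl : ∀ i, IsClosed (Xs i))
    (hcover : ⋃ i, Xs i = Set.univ)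
    (hconn : ∀ i, ConnectedMod ↥(Xs i)
      (GenIdeal {R : Set ↥(Xs i) | IsRealcompact ↥(closure R)}))
    (hnrc : ¬ IsRealcompact ↥(⋂ i, Xs i)) :
    ConnectedMod X (GenIdeal {R : Set X | IsRealcompact ↥(closure R)}) :=
  ConnectedMod.of_iUnion (isSetIdeal_genIdeal _) hcover
    (fun i _ => preimage_val_mem_realcompactIdeal (hcl i))
    (fun i _ => image_val_mem_realcompactIdeal (hcl i)) hconn
    fun h => hnrc ((isClosed_iInter hcl).isRealcompact_of_mem_realcompactIdeal h)

/-- If a normal Tychonoff space `X` is `X₁ ∪ ⋯ ∪ Xₙ` with each `Xᵢ` a closed subspace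
connected modulo realcompactness (modulo the ideal in `Xᵢ` generated by the subsets of
`Xᵢ` with realcompact closure), and `X₁ ∩ ⋯ ∩ Xₙ` is not realcompact, then `X` is
connected modulo realcompactness. -/
theorem connectedMod_realcompact_of_finite_union {X : Type u} [TopologicalSpace X]
    [NormalSpace X] [T35Space X]
    (n : ℕ) (hn : 0 < n) (Xs : Fin n → Set X)
    (hcl : ∀ i, IsClosed (Xs i))
    (hcover : ⋃ i, Xs i = Set.univ)
    (hconn : ∀ i, ConnectedMod ↥(Xs i)
      (GenIdeal {R : Set ↥(Xs i) | IsRealcompact ↥(closure R)}))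
    (hnrc : ¬ IsRealcompact ↥(⋂ i, Xs i)) :
    ConnectedMod X (GenIdeal {R : Set X | IsRealcompact ↥(closure R)}) :=
  connectedMod_realcompact_of_finite_union_general n Xs hcl hcover hconn hnrc
end
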